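/- arXiv:2502.16559 — 10 statements merged into one kernel-verified Lean document; each statement's English description precedes it below -/
import Mathlib

section
/- Let P : ℝ³ → ℝ³ be a smooth map with P(p) ≠ 0 and ⟨P(p), curl P(p)⟩ = 0 for all p, and let ξ be the 1-form ξ(p)(v) = ⟨P(p), v⟩. Let λ : ℝ³ → ℝ be smooth and Z a vector field with d(λ + ⟨ξ,Z⟩) = div(Z)·ξ, set N = λI + Z⊗ξ, and for each integer k ≥ 1 define I_k : ℝ³ → ℝ by I_k(p) = (1/(2k))·Tr(N(p)^k). Then the Poisson bracket {I_j, I_k}(p) := ⟨P(p), ∇I_j(p) × ∇I_k(p)⟩ vanishes for all j, k ≥ 1 and all p ∈ ℝ³ (involutivity of every three-dimensional oriented PqN manifold with never vanishing Poisson tensor). -/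
noncomputable section

open Matrix

/-- Points of ℝ³. -/
abbrev V3 : Type := Fin 3 → ℝ

/-- Partial derivative in the `i`-th coordinate direction. -/
def pd (i : Fin 3) (f : V3 → ℝ) (p : V3) : ℝ := fderiv ℝ f p (Pi.single i 1)

/-- curl of a vector field on ℝ³. -/
def curl3 (P : V3 → V3) (p : V3) : V3 :=
  ![pd 1 (fun q => P q 2) p - pd 2 (fun q => P q 1) p,
    pd 2 (fun q => P q 0) p - pd 0 (fun q => P q 2) p,
    pd 0 (fun q => P q 1) p - pd 1 (fun q => P q 0) p]

/-- divergence of a vector field: trace of its Fréchet derivative. -/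
def div3 (Z : V3 → V3) (p : V3) : ℝ := ∑ i, fderiv ℝ Z p (Pi.single i 1) i

/-- gradient of a function on ℝ³. -/
def grad (f : V3 → ℝ) (p : V3) : V3 := fun i => fderiv ℝ f p (Pi.single i 1)

/-- The linear functional `v ↦ w ⬝ᵥ v`. -/
def dotL (w : V3) : V3 →ₗ[ℝ] ℝ where
  toFun v := w ⬝ᵥ v
  map_add' u v := by simp [dotProduct_add]
  map_smul' c v := by simp [dotProduct_smul]

/-- The endomorphism `N(p) = λ(p)·I + Z(p)⊗ξ(p)`, where `ξ(p)(v) = ⟨P(p),v⟩`. -/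
def Nend (lam : V3 → ℝ) (Z P : V3 → V3) (p : V3) : V3 →ₗ[ℝ] V3 :=
  lam p • LinearMap.id + (dotL (P p)).smulRight (Z p)

/-- The rank-one part squares to `⟨w,z⟩` times itself. -/
lemma R_sq (w z : V3) : ((dotL w).smulRight z) * ((dotL w).smulRight z)
    = (w ⬝ᵥ z) • ((dotL w).smulRight z) := by
  ext v
  simp [Module.End.mul_apply, dotL, dotProduct, Fin.sum_univ_three]
  ring

/-- Structure of powers of `l•1 + R`. -/
lemma pow_struct (l : ℝ) (z w : V3) (k : ℕ) :
    ∃ c : ℝ, (l • (1 : V3 →ₗ[ℝ] V3) + (dotL w).smulRight z) ^ k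
        = l ^ k • (1 : V3 →ₗ[ℝ] V3) + c • ((dotL w).smulRight z)
      ∧ c * (w ⬝ᵥ z) = (l + w ⬝ᵥ z) ^ k - l ^ k := by
  induction k with
  | zero => exact ⟨0, by simp, by simp⟩
  | succ n ih =>
    obtain ⟨c, hc, hcm⟩ := ih
    refine ⟨l ^ n + c * l + c * (w ⬝ᵥ z), ?_, by linear_combination (l + w ⬝ᵥ z) * hcm⟩
    rw [pow_succ, hc]
    simp only [add_mul, mul_add, smul_mul_assoc, mul_smul_comm, one_mul, mul_one, R_sq,
      smul_smul]
    module

/-- Trace of powers of `l•1 + R`. -/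
lemma traceN (l : ℝ) (z w : V3) (k : ℕ) :
    LinearMap.trace ℝ V3 ((l • (1 : V3 →ₗ[ℝ] V3) + (dotL w).smulRight z) ^ k)
      = 2 * l ^ k + (l + w ⬝ᵥ z) ^ k := by
  obtain ⟨c, hc, hcm⟩ := pow_struct l z w k
  rw [hc]
  have h1 : LinearMap.trace ℝ V3 ((dotL w).smulRight z) = w ⬝ᵥ z := by
    rw [LinearMap.trace_eq_matrix_trace ℝ (Pi.basisFun ℝ (Fin 3))]
    simp [LinearMap.toMatrix_apply, Matrix.trace, Matrix.diag, dotL, dotProduct,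
      Fin.sum_univ_three]
  have h2 : LinearMap.trace ℝ V3 (1 : V3 →ₗ[ℝ] V3) = 3 := by
    rw [LinearMap.trace_one]; simp
  simp only [map_add, LinearMap.map_smul, h1, h2, smul_eq_mul]
  rw [hcm]; ring

/-- Derivative of a power of a real-valued function. -/
lemma hasFDerivAt_pow_succ {f : V3 → ℝ} {f' : V3 →L[ℝ] ℝ} {x : V3}
    (hf : HasFDerivAt f f' x) (n : ℕ) :
    HasFDerivAt (fun q => f q ^ (n + 1)) (((n + 1 : ℝ) * f x ^ n) • f') x := by
  induction n with
  | zero => simpa using hf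
  | succ m ih =>
    have h := ih.mul hf
    have heq : ((fun q => f q ^ (m + 1)) * f) = fun q => f q ^ (m + 2) := by
      funext q; simp only [Pi.mul_apply]; ring
    rw [heq] at h
    refine h.congr_fderiv ?_
    ext v
    simp [smul_smul]
    ring

/-- Scalar triple product with two vectors in the span of `g` and `w`. -/
lemma triple (w g : V3) (a b c e : ℝ) :
    w ⬝ᵥ (crossProduct (a • g + b • w) (c • g + e • w)) = 0 := by
  simp [cross_apply, dotProduct, Fin.sum_univ_three]
  ring

/-- Involutivity of every three-dimensional oriented PqN manifold with
never vanishing Poisson tensor: the functions `I_k = (1/2k)Tr(N^k)` pairwise Poisson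
commute. -/
theorem stmt2
    (P : V3 → V3) (hP : ContDiff ℝ (⊤ : ℕ∞) P)
    (hPne : ∀ p, P p ≠ 0)
    (hPoisson : ∀ p, P p ⬝ᵥ curl3 P p = 0)
    (lam : V3 → ℝ) (hlam : ContDiff ℝ (⊤ : ℕ∞) lam)
    (Z : V3 → V3) (hZ : ContDiff ℝ (⊤ : ℕ∞) Z)
    (hcomp : ∀ p v, fderiv ℝ (fun q => lam q + P q ⬝ᵥ Z q) p v = div3 Z p * (P p ⬝ᵥ v))
    (I : ℕ → V3 → ℝ)
    (hI : ∀ k p, I k p = (1 / (2 * (k : ℝ))) * LinearMap.trace ℝ V3 ((Nend lam Z P p) ^ k)) :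
    ∀ j k : ℕ, 1 ≤ j → 1 ≤ k → ∀ p,
      P p ⬝ᵥ crossProduct (grad (I j) p) (grad (I k) p) = 0 := by
  -- the dot product `⟨P,Z⟩` is smooth
  have hdot : ContDiff ℝ (⊤ : ℕ∞) (fun q => P q ⬝ᵥ Z q) := by
    have h : (fun q => P q ⬝ᵥ Z q) = fun q => ∑ i : Fin 3, P q i * Z q i := by
      funext q; rfl
    rw [h]
    exact ContDiff.sum fun i _ => (contDiff_pi.mp hP i).mul (contDiff_pi.mp hZ i)
  set g : V3 → ℝ := fun q => lam q + P q ⬝ᵥ Z q with hgdef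
  have hg : ContDiff ℝ (⊤ : ℕ∞) g := hlam.add hdot
  -- the formula for `I m`
  have hIf : ∀ m : ℕ, I m = fun q => (1 / (2 * (m : ℝ))) * (2 * lam q ^ m + g q ^ m) := by
    intro m; funext q
    rw [hI]
    congr 1
    exact traceN (lam q) (Z q) (P q) m
  -- the gradient of `I (n+1)` lies in the span of `grad lam` and `P`
  have key : ∀ n : ℕ, ∀ p : V3, ∃ a b : ℝ,
      grad (I (n + 1)) p = a • grad lam p + b • P p := by
    intro n p
    have hlamd := (hlam.differentiable (by simp) p).hasFDerivAt
    have hgd := (hg.differentiable (by simp) p).hasFDerivAt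
    have h1 := hasFDerivAt_pow_succ hlamd n
    have h2 := hasFDerivAt_pow_succ hgd n
    have h3 := ((h1.const_mul (2 : ℝ)).add h2).const_mul (1 / (2 * ((n : ℝ) + 1)))
    have hIe : I (n + 1)
        = fun q => (1 / (2 * ((n : ℝ) + 1))) * (2 * lam q ^ (n + 1) + g q ^ (n + 1)) := by
      rw [hIf (n + 1)]
      push_cast
      rfl
    refine ⟨(1 / (2 * ((n : ℝ) + 1))) * (2 * ((n + 1 : ℝ) * lam p ^ n)),
            (1 / (2 * ((n : ℝ) + 1))) * (((n + 1 : ℝ) * g p ^ n) * div3 Z p), ?_⟩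
    have hfd : fderiv ℝ (I (n + 1)) p
        = (1 / (2 * ((n : ℝ) + 1))) • ((2 : ℝ) • (((n + 1 : ℝ) * lam p ^ n) • fderiv ℝ lam p)
            + ((n + 1 : ℝ) * g p ^ n) • fderiv ℝ g p) := by
      rw [hIe]
      exact h3.fderiv
    funext i
    have hgc : fderiv ℝ g p (Pi.single i 1) = div3 Z p * P p i := by
      rw [hgdef, hcomp p (Pi.single i 1), dotProduct_single, mul_one]
    simp only [grad, hfd, ContinuousLinearMap.smul_apply, ContinuousLinearMap.add_apply,
      Pi.add_apply, Pi.smul_apply, smul_eq_mul, hgc]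
    ring
  intro j k hj hk p
  obtain ⟨n, rfl⟩ : ∃ n, j = n + 1 := ⟨j - 1, (Nat.succ_pred_eq_of_pos hj).symm⟩
  obtain ⟨m, rfl⟩ : ∃ m, k = m + 1 := ⟨k - 1, (Nat.succ_pred_eq_of_pos hk).symm⟩
  obtain ⟨a, b, hab⟩ := key n p
  obtain ⟨c, e, hce⟩ := key m p
  rw [hab, hce]
  exact triple (P p) (grad lam p) a b c e
end
end

section
/- Let P : ℝ³ → ℝ³ be a smooth map with P(p) ≠ 0 and ⟨P(p), curl P(p)⟩ = 0 for all p, let ξ be the 1-form ξ(p)(v) = ⟨P(p), v⟩, let λ : ℝ³ → ℝ be smooth and Z a vector field with d(λ + ⟨ξ,Z⟩) = div(Z)·ξ, and set N = λI + Z⊗ξ and θ = div(Z)·ξ. Then (N, θ) is a Haantjes structure on ℝ³, i.e.: (H1) H_N(X,Y) = 0 for all vector fields X, Y; (H2) dθ = 0; (H3) d(i_Nθ) = 0, where i_Nθ is the 1-form p ↦ θ(p)∘N(p); (H4) ⟨θ, T_N(X,Y)⟩ = 0 for all vector fields X, Y. -/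
noncomputable section

open Matrix

/-- Lie bracket of vector fields on ℝ³. -/
def lieB (X Y : V3 → V3) : V3 → V3 :=
  fun p => fderiv ℝ Y p (X p) - fderiv ℝ X p (Y p)

/-- Nijenhuis torsion of a (1,1) tensor field, given by its pointwise action. -/
def nijT (N : V3 → V3 → V3) (X Y : V3 → V3) : V3 → V3 :=
  fun p =>
    lieB (fun q => N q (X q)) (fun q => N q (Y q)) p
      - N p (lieB (fun q => N q (X q)) Y p + lieB X (fun q => N q (Y q)) p
              - N p (lieB X Y p))

/-- Haantjes torsion of a (1,1) tensor field. -/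
def haanT (N : V3 → V3 → V3) (X Y : V3 → V3) : V3 → V3 :=
  fun p =>
    nijT N (fun q => N q (X q)) (fun q => N q (Y q)) p
      - N p (nijT N (fun q => N q (X q)) Y p + nijT N X (fun q => N q (Y q)) p
              - N p (nijT N X Y p))

/-- Exterior derivative of a 1-form (given by its pointwise action), evaluated on
vector fields: `dθ(X,Y) = X(⟨θ,Y⟩) − Y(⟨θ,X⟩) − ⟨θ,[X,Y]⟩`. -/
def dOne (θ : V3 → V3 → ℝ) (X Y : V3 → V3) : V3 → ℝ :=
  fun p => fderiv ℝ (fun q => θ q (Y q)) p (X p) - fderiv ℝ (fun q => θ q (X q)) p (Y p)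
    - θ p (lieB X Y p)

lemma one_le_infty : (1 : WithTop ℕ∞) ≤ (⊤ : ℕ∞) := by
  exact_mod_cast le_top

lemma contDiff_dot {n : WithTop ℕ∞} {F G : V3 → V3} (hF : ContDiff ℝ n F) (hG : ContDiff ℝ n G) :
    ContDiff ℝ n fun q => F q ⬝ᵥ G q := by
  simp only [dotProduct]
  exact ContDiff.sum fun i _ => (contDiff_pi.mp hF i).mul (contDiff_pi.mp hG i)

lemma dOne_exact {F : V3 → ℝ} (hF : ContDiff ℝ (⊤ : ℕ∞) F) {X Y : V3 → V3}
    (hX : Differentiable ℝ X) (hY : Differentiable ℝ Y) (p : V3) :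
    dOne (fun q v => fderiv ℝ F q v) X Y p = 0 := by
  obtain ⟨hFd, hF'⟩ := contDiff_infty_iff_fderiv.mp hF
  have hF'd : Differentiable ℝ (fderiv ℝ F) := hF'.differentiable (by simp)
  have hsymm := second_derivative_symmetric (f := F) (f' := fderiv ℝ F)
    (f'' := fderiv ℝ (fderiv ℝ F) p) (fun y => (hFd y).hasFDerivAt) (hF'd p).hasFDerivAt
  have h1 : ∀ (U : V3 → V3), Differentiable ℝ U → ∀ v,
      fderiv ℝ (fun q => fderiv ℝ F q (U q)) p v
        = fderiv ℝ F p (fderiv ℝ U p v) + fderiv ℝ (fderiv ℝ F) p v (U p) := by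
    intro U hU v
    rw [((hF'd p).hasFDerivAt.clm_apply (hU p).hasFDerivAt).fderiv]
    simp [ContinuousLinearMap.add_apply, ContinuousLinearMap.comp_apply,
      ContinuousLinearMap.flip_apply]
  simp only [dOne, lieB]
  rw [h1 Y hY (X p), h1 X hX (Y p), map_sub]
  have := hsymm (X p) (Y p)
  linarith

lemma diff_proj {F : V3 → V3} (hF : Differentiable ℝ F) (i : Fin 3) :
    Differentiable ℝ (fun q => F q i) :=
  (ContinuousLinearMap.proj (R := ℝ) (φ := fun _ : Fin 3 => ℝ) i).differentiable.comp hF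

lemma diff_dot {F G : V3 → V3} (hF : Differentiable ℝ F) (hG : Differentiable ℝ G) :
    Differentiable ℝ fun q => F q ⬝ᵥ G q := by
  simp only [dotProduct]
  exact Differentiable.fun_sum fun i _ => (diff_proj hF i).mul (diff_proj hG i)

lemma fderiv_comp_proj {F : V3 → V3} (hF : Differentiable ℝ F) (p : V3) (i : Fin 3) (v : V3) :
    fderiv ℝ (fun q => F q i) p v = fderiv ℝ F p v i := by
  have h := ((ContinuousLinearMap.proj (R := ℝ) (φ := fun _ : Fin 3 => ℝ) i).hasFDerivAt.comp p
    (hF p).hasFDerivAt).fderiv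
  rw [show (fun q => F q i) = ((ContinuousLinearMap.proj (R := ℝ) (φ := fun _ : Fin 3 => ℝ) i) ∘ F)
    from rfl, h]
  rfl

lemma fderiv_dot {F G : V3 → V3} (hF : Differentiable ℝ F) (hG : Differentiable ℝ G)
    (p v : V3) :
    fderiv ℝ (fun q => F q ⬝ᵥ G q) p v = fderiv ℝ F p v ⬝ᵥ G p + F p ⬝ᵥ fderiv ℝ G p v := by
  have h : HasFDerivAt (fun q => F q ⬝ᵥ G q)
      (∑ i : Fin 3, (F p i • ((ContinuousLinearMap.proj i).comp (fderiv ℝ G p))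
        + G p i • ((ContinuousLinearMap.proj i).comp (fderiv ℝ F p)))) p := by
    have e : (fun q => F q ⬝ᵥ G q) = fun q => ∑ i : Fin 3, F q i * G q i := by
      funext q; simp [dotProduct]
    rw [e]
    refine HasFDerivAt.fun_sum fun i _ => ?_
    exact ((ContinuousLinearMap.proj i).hasFDerivAt.comp p (hF p).hasFDerivAt).fun_mul
      ((ContinuousLinearMap.proj (R := ℝ) (φ := fun _ : Fin 3 => ℝ) i).hasFDerivAt.comp p (hG p).hasFDerivAt)
  rw [h.fderiv]
  simp only [ContinuousLinearMap.coe_sum', Finset.sum_apply, ContinuousLinearMap.add_apply,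
    ContinuousLinearMap.coe_smul', Pi.smul_apply, ContinuousLinearMap.coe_comp',
    Function.comp_apply, ContinuousLinearMap.proj_apply, smul_eq_mul, dotProduct,
    Fin.sum_univ_three]
  ring

lemma fderiv_smul'' {c : V3 → ℝ} {F : V3 → V3} {p : V3} (hc : DifferentiableAt ℝ c p)
    (hF : DifferentiableAt ℝ F p) (v : V3) :
    fderiv ℝ (fun q => c q • F q) p v = fderiv ℝ c p v • F p + c p • fderiv ℝ F p v := by
  rw [fderiv_fun_smul hc hF]
  simp only [ContinuousLinearMap.add_apply, ContinuousLinearMap.coe_smul', Pi.smul_apply,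
    ContinuousLinearMap.smulRight_apply]
  module

lemma nij_formula (P : V3 → V3) (hP : ContDiff ℝ (⊤ : ℕ∞) P)
    (hPoisson : ∀ p, P p ⬝ᵥ curl3 P p = 0)
    (lam : V3 → ℝ) (hlam : ContDiff ℝ (⊤ : ℕ∞) lam)
    (Z : V3 → V3) (hZ : ContDiff ℝ (⊤ : ℕ∞) Z)
    (hcomp : ∀ p v, fderiv ℝ (fun q => lam q + P q ⬝ᵥ Z q) p v = div3 Z p * (P p ⬝ᵥ v))
    (X Y : V3 → V3) (hX : ContDiff ℝ (⊤ : ℕ∞) X) (hY : ContDiff ℝ (⊤ : ℕ∞) Y) (p : V3) :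
    nijT (fun p v => lam p • v + (P p ⬝ᵥ v) • Z p) X Y p
      = fderiv ℝ lam p (Z p) • ((P p ⬝ᵥ X p) • Y p - (P p ⬝ᵥ Y p) • X p) := by
  have dP := hP.differentiable (by simp)
  have dX := hX.differentiable (by simp)
  have dY := hY.differentiable (by simp)
  have dZ := hZ.differentiable (by simp)
  have dlam := hlam.differentiable (by simp)
  have key : ∀ (U : V3 → V3), Differentiable ℝ U → ∀ v : V3,
      fderiv ℝ (fun q => lam q • U q + (P q ⬝ᵥ U q) • Z q) p v
        = fderiv ℝ lam p v • U p + lam p • fderiv ℝ U p v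
          + ((fderiv ℝ P p v ⬝ᵥ U p + P p ⬝ᵥ fderiv ℝ U p v) • Z p
              + (P p ⬝ᵥ U p) • fderiv ℝ Z p v) := by
    intro U hU v
    rw [fderiv_fun_add ((dlam p).fun_smul (hU p)) (((diff_dot dP hU) p).fun_smul (dZ p)),
      ContinuousLinearMap.add_apply, fderiv_smul'' (dlam p) (hU p),
      fderiv_smul'' ((diff_dot dP hU) p) (dZ p), fderiv_dot dP hU]
  -- step B scalars
  have hc' : ∀ v : V3, fderiv ℝ lam p v + (fderiv ℝ P p v ⬝ᵥ Z p + P p ⬝ᵥ fderiv ℝ Z p v)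
      = div3 Z p * (P p ⬝ᵥ v) := by
    intro v
    rw [← fderiv_dot dP dZ, ← ContinuousLinearMap.add_apply,
      ← fderiv_fun_add (dlam p) ((diff_dot dP dZ) p), hcomp]
  have hvdec : ∀ v : V3, v = v 0 • (Pi.single 0 1 : V3) + v 1 • (Pi.single 1 1 : V3) + v 2 • (Pi.single 2 1 : V3) := by
    intro v; funext i; fin_cases i <;> simp [Pi.single_apply]
  have hexp : ∀ u w : V3, fderiv ℝ P p u ⬝ᵥ w
      = u 0 * (fderiv ℝ P p (Pi.single 0 1) 0 * w 0 + fderiv ℝ P p (Pi.single 0 1) 1 * w 1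
          + fderiv ℝ P p (Pi.single 0 1) 2 * w 2)
      + u 1 * (fderiv ℝ P p (Pi.single 1 1) 0 * w 0 + fderiv ℝ P p (Pi.single 1 1) 1 * w 1
          + fderiv ℝ P p (Pi.single 1 1) 2 * w 2)
      + u 2 * (fderiv ℝ P p (Pi.single 2 1) 0 * w 0 + fderiv ℝ P p (Pi.single 2 1) 1 * w 1
          + fderiv ℝ P p (Pi.single 2 1) 2 * w 2) := by
    intro u w
    conv_lhs => rw [hvdec u]
    simp only [_root_.map_add, _root_.map_smul, add_dotProduct, smul_dotProduct, smul_eq_mul, dotProduct,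
      Fin.sum_univ_three, Pi.smul_apply, Pi.add_apply]
    ring
  have hP3 := hPoisson p
  simp only [curl3, pd, dotProduct, Fin.sum_univ_three, Matrix.cons_val_zero, Matrix.cons_val_one,
    Matrix.head_cons, Matrix.cons_val_two, Matrix.tail_cons, fderiv_comp_proj dP] at hP3
  have hFrob : (P p ⬝ᵥ X p) * (fderiv ℝ P p (Z p) ⬝ᵥ Y p - fderiv ℝ P p (Y p) ⬝ᵥ Z p)
      + (P p ⬝ᵥ Y p) * (fderiv ℝ P p (X p) ⬝ᵥ Z p - fderiv ℝ P p (Z p) ⬝ᵥ X p)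
      + (P p ⬝ᵥ Z p) * (fderiv ℝ P p (Y p) ⬝ᵥ X p - fderiv ℝ P p (X p) ⬝ᵥ Y p) = 0 := by
    simp only [hexp]
    simp only [dotProduct, Fin.sum_univ_three]
    linear_combination (-(X p 0 * (Y p 1 * Z p 2 - Y p 2 * Z p 1)
      - X p 1 * (Y p 0 * Z p 2 - Y p 2 * Z p 0)
      + X p 2 * (Y p 0 * Z p 1 - Y p 1 * Z p 0))) * hP3
  have hS : (P p ⬝ᵥ X p) * fderiv ℝ lam p (Y p) - (P p ⬝ᵥ Y p) * fderiv ℝ lam p (X p)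
      + (P p ⬝ᵥ X p) * (P p ⬝ᵥ fderiv ℝ Z p (Y p)) - (P p ⬝ᵥ Y p) * (P p ⬝ᵥ fderiv ℝ Z p (X p))
      + (P p ⬝ᵥ X p) * (fderiv ℝ P p (Z p) ⬝ᵥ Y p) - (P p ⬝ᵥ Y p) * (fderiv ℝ P p (Z p) ⬝ᵥ X p)
      + (P p ⬝ᵥ Z p) * (fderiv ℝ P p (Y p) ⬝ᵥ X p)
      - (P p ⬝ᵥ Z p) * (fderiv ℝ P p (X p) ⬝ᵥ Y p) = 0 := by
    linear_combination (P p ⬝ᵥ X p) * hc' (Y p) - (P p ⬝ᵥ Y p) * hc' (X p) + hFrob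
  have expand : nijT (fun p v => lam p • v + (P p ⬝ᵥ v) • Z p) X Y p
      = fderiv ℝ lam p (Z p) • ((P p ⬝ᵥ X p) • Y p - (P p ⬝ᵥ Y p) • X p)
        + ((P p ⬝ᵥ X p) * fderiv ℝ lam p (Y p) - (P p ⬝ᵥ Y p) * fderiv ℝ lam p (X p)
          + (P p ⬝ᵥ X p) * (P p ⬝ᵥ fderiv ℝ Z p (Y p))
          - (P p ⬝ᵥ Y p) * (P p ⬝ᵥ fderiv ℝ Z p (X p))
          + (P p ⬝ᵥ X p) * (fderiv ℝ P p (Z p) ⬝ᵥ Y p)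
          - (P p ⬝ᵥ Y p) * (fderiv ℝ P p (Z p) ⬝ᵥ X p)
          + (P p ⬝ᵥ Z p) * (fderiv ℝ P p (Y p) ⬝ᵥ X p)
          - (P p ⬝ᵥ Z p) * (fderiv ℝ P p (X p) ⬝ᵥ Y p)) • Z p := by
    simp only [nijT, lieB]
    simp only [key X dX, key Y dY]
    simp only [_root_.map_add, _root_.map_smul, map_sub, dotProduct_add, dotProduct_smul, add_dotProduct,
      smul_dotProduct, dotProduct_sub, sub_dotProduct, smul_eq_mul, smul_add, smul_sub,
      add_smul, sub_smul, mul_smul]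
    module
  rw [expand, hS, zero_smul, add_zero]

/-- A PqN structure on oriented ℝ³ with never vanishing Poisson tensor
gives rise to a Haantjes structure `(N, θ)` with `θ = div(Z)·ξ`. -/
theorem stmt3
    (P : V3 → V3) (hP : ContDiff ℝ (⊤ : ℕ∞) P)
    (hPne : ∀ p, P p ≠ 0)
    (hPoisson : ∀ p, P p ⬝ᵥ curl3 P p = 0)
    (lam : V3 → ℝ) (hlam : ContDiff ℝ (⊤ : ℕ∞) lam)
    (Z : V3 → V3) (hZ : ContDiff ℝ (⊤ : ℕ∞) Z)
    (hcomp : ∀ p v, fderiv ℝ (fun q => lam q + P q ⬝ᵥ Z q) p v = div3 Z p * (P p ⬝ᵥ v))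
    (N : V3 → V3 → V3)
    (hN : ∀ p v, N p v = lam p • v + (P p ⬝ᵥ v) • Z p)
    (θ : V3 → V3 → ℝ)
    (hθ : ∀ p v, θ p v = div3 Z p * (P p ⬝ᵥ v)) :
    -- (H1) the Haantjes torsion of N vanishes
    (∀ X Y : V3 → V3, ContDiff ℝ (⊤ : ℕ∞) X → ContDiff ℝ (⊤ : ℕ∞) Y → ∀ p, haanT N X Y p = 0) ∧
    -- (H2) θ is closed
    (∀ X Y : V3 → V3, ContDiff ℝ (⊤ : ℕ∞) X → ContDiff ℝ (⊤ : ℕ∞) Y → ∀ p, dOne θ X Y p = 0) ∧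
    -- (H3) i_N θ is closed
    (∀ X Y : V3 → V3, ContDiff ℝ (⊤ : ℕ∞) X → ContDiff ℝ (⊤ : ℕ∞) Y → ∀ p,
      dOne (fun q v => θ q (N q v)) X Y p = 0) ∧
    -- (H4) ⟨θ, T_N(X,Y)⟩ = 0
    (∀ X Y : V3 → V3, ContDiff ℝ (⊤ : ℕ∞) X → ContDiff ℝ (⊤ : ℕ∞) Y → ∀ p,
      θ p (nijT N X Y p) = 0) := by
  have hNe : N = fun p v => lam p • v + (P p ⬝ᵥ v) • Z p := funext fun p => funext fun v => hN p v
  have hθe : θ = fun q v => div3 Z q * (P q ⬝ᵥ v) := funext fun p => funext fun v => hθ p v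
  subst hNe hθe
  have hFc : ContDiff ℝ (⊤ : ℕ∞) (fun r => lam r + P r ⬝ᵥ Z r) := hlam.add (contDiff_dot hP hZ)
  refine ⟨?_, ?_, ?_, ?_⟩
  · -- H1
    intro X Y hX hY p
    have hNX : ContDiff ℝ (⊤ : ℕ∞) (fun q => lam q • X q + (P q ⬝ᵥ X q) • Z q) :=
      (hlam.smul hX).add ((contDiff_dot hP hX).smul hZ)
    have hNY : ContDiff ℝ (⊤ : ℕ∞) (fun q => lam q • Y q + (P q ⬝ᵥ Y q) • Z q) :=
      (hlam.smul hY).add ((contDiff_dot hP hY).smul hZ)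
    have k1 := nij_formula P hP hPoisson lam hlam Z hZ hcomp _ _ hNX hNY p
    have k2 := nij_formula P hP hPoisson lam hlam Z hZ hcomp _ Y hNX hY p
    have k3 := nij_formula P hP hPoisson lam hlam Z hZ hcomp X _ hX hNY p
    have k4 := nij_formula P hP hPoisson lam hlam Z hZ hcomp X Y hX hY p
    simp only [haanT, k1, k2, k3, k4]
    simp only [dotProduct_add, dotProduct_sub, dotProduct_smul, smul_eq_mul, smul_add,
      smul_sub, add_smul, sub_smul, mul_smul]
    module
  · -- H2
    intro X Y hX hY p
    have hform : (fun (q v : V3) => div3 Z q * (P q ⬝ᵥ v))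
        = fun q v => fderiv ℝ (fun r => lam r + P r ⬝ᵥ Z r) q v := by
      funext q v; rw [hcomp]
    rw [hform]
    exact dOne_exact (hFc.of_le (by simp)) (hX.differentiable (by simp)) (hY.differentiable (by simp)) p
  · -- H3
    intro X Y hX hY p
    have hFd : Differentiable ℝ (fun r => lam r + P r ⬝ᵥ Z r) := hFc.differentiable (by simp)
    have hG : ContDiff ℝ (⊤ : ℕ∞) (fun r => (lam r + P r ⬝ᵥ Z r) * (lam r + P r ⬝ᵥ Z r) * (1/2)) :=
      (hFc.mul hFc).mul contDiff_const
    have hdG : ∀ q v, fderiv ℝ (fun r => (lam r + P r ⬝ᵥ Z r) * (lam r + P r ⬝ᵥ Z r) * (1/2)) q v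
        = (lam q + P q ⬝ᵥ Z q) * fderiv ℝ (fun r => lam r + P r ⬝ᵥ Z r) q v := by
      intro q v
      rw [(((hFd q).hasFDerivAt.fun_mul (hFd q).hasFDerivAt).mul_const (1/2 : ℝ)).fderiv]
      simp only [ContinuousLinearMap.coe_smul', Pi.smul_apply, ContinuousLinearMap.add_apply,
        smul_eq_mul]
      ring
    show dOne (fun q v => div3 Z q * (P q ⬝ᵥ (lam q • v + (P q ⬝ᵥ v) • Z q))) X Y p = 0
    have hform : (fun (q v : V3) => div3 Z q * (P q ⬝ᵥ (lam q • v + (P q ⬝ᵥ v) • Z q)))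
        = fun q v => fderiv ℝ (fun r => (lam r + P r ⬝ᵥ Z r) * (lam r + P r ⬝ᵥ Z r) * (1/2)) q v := by
      funext q v
      rw [hdG, hcomp]
      simp only [dotProduct_add, dotProduct_smul, smul_eq_mul]
      ring
    rw [hform]
    exact dOne_exact (hG.of_le (by simp)) (hX.differentiable (by simp)) (hY.differentiable (by simp)) p
  · -- H4
    intro X Y hX hY p
    have k4 := nij_formula P hP hPoisson lam hlam Z hZ hcomp X Y hX hY p
    rw [k4]
    simp only [dotProduct_smul, dotProduct_sub, smul_eq_mul]
    ring
end
end

section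
/- Let P : ℝ³ → ℝ³ be a smooth map with P(p) ≠ 0 and ⟨P(p), curl P(p)⟩ = 0 for all p, let ξ be the 1-form ξ(p)(v) = ⟨P(p), v⟩, let λ : ℝ³ → ℝ be smooth and Z a vector field with d(λ + ⟨ξ,Z⟩) = div(Z)·ξ, and set N = λI + Z⊗ξ and θ = div(Z)·ξ. Then the family {N^0, N^1, ..., N^{p−1}} of powers of N is a generalized Lenard–Magri chain for the Haantjes structure (N, θ): for all integers i, j, k ≥ 0 one has (C1) H_{N^k}(X,Y) = 0 for all vector fields X, Y; (C2) N^i∘N^j = N^j∘N^i; (C3) i_{N^k}θ = (λ + ⟨ξ,Z⟩)^k·θ and d(i_{N^k}θ) = 0, where i_{N^k}θ is the 1-form p ↦ θ(p)∘N(p)^k; (C4) ⟨θ, T_{N^k}(X,Y)⟩ = 0 for all vector fields X, Y. -/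
noncomputable section

open Matrix

set_option synthInstance.maxHeartbeats 1000000
namespace S4
lemma diffAt_coord {f : V3 → V3} {p : V3} (hf : DifferentiableAt ℝ f p) (i : Fin 3) :
    DifferentiableAt ℝ (fun q => f q i) p :=
  ((ContinuousLinearMap.proj (R := ℝ) (φ := fun _ : Fin 3 => ℝ) i).differentiableAt).comp p hf

lemma fderiv_coord {f : V3 → V3} {p : V3} (hf : DifferentiableAt ℝ f p) (i : Fin 3) (u : V3) :
    fderiv ℝ (fun q => f q i) p u = fderiv ℝ f p u i := by
  have h := ((ContinuousLinearMap.proj (R := ℝ) (φ := fun _ : Fin 3 => ℝ) i).hasFDerivAt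
      (x := f p)).comp p hf.hasFDerivAt
  have h2 : fderiv ℝ (fun q => f q i) p
      = (ContinuousLinearMap.proj (R := ℝ) (φ := fun _ : Fin 3 => ℝ) i).comp (fderiv ℝ f p) :=
    h.fderiv
  rw [h2]; rfl

def e3 (i : Fin 3) : V3 := Pi.single i 1

lemma clm_apply_expand (L : V3 →L[ℝ] V3) (u : V3) :
    L u = u 0 • L (e3 0) + u 1 • L (e3 1) + u 2 • L (e3 2) := by
  have hu : u = u 0 • e3 0 + u 1 • e3 1 + u 2 • e3 2 := by
    funext i
    fin_cases i <;> simp [e3, Pi.single_apply]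
  conv_lhs => rw [hu]
  simp [map_add, _root_.map_smul]

lemma poisson_aux {P : V3 → V3} {p : V3} (hP : DifferentiableAt ℝ P p)
    (h0 : P p ⬝ᵥ curl3 P p = 0) (u v w : V3) :
    (P p ⬝ᵥ u) * (fderiv ℝ P p v ⬝ᵥ w - fderiv ℝ P p w ⬝ᵥ v)
      + (P p ⬝ᵥ v) * (fderiv ℝ P p w ⬝ᵥ u - fderiv ℝ P p u ⬝ᵥ w)
      + (P p ⬝ᵥ w) * (fderiv ℝ P p u ⬝ᵥ v - fderiv ℝ P p v ⬝ᵥ u) = 0 := by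
  have hc : ∀ i j : Fin 3, pd i (fun q => P q j) p = fderiv ℝ P p (e3 i) j := by
    intro i j; exact fderiv_coord hP j _
  simp only [curl3, hc, dotProduct, Fin.sum_univ_three, Matrix.cons_val_zero,
    Matrix.cons_val_one, Matrix.head_cons, Matrix.cons_val_two, Matrix.tail_cons] at h0
  simp only [clm_apply_expand (fderiv ℝ P p) u, clm_apply_expand (fderiv ℝ P p) v,
    clm_apply_expand (fderiv ℝ P p) w, dotProduct, Fin.sum_univ_three, Pi.add_apply,
    Pi.smul_apply, smul_eq_mul]
  linear_combination (u 0 * (v 1 * w 2 - v 2 * w 1) - u 1 * (v 0 * w 2 - v 2 * w 0)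
    + u 2 * (v 0 * w 1 - v 1 * w 0)) * h0
lemma diffAt_dot {f g : V3 → V3} {p : V3} (hf : DifferentiableAt ℝ f p)
    (hg : DifferentiableAt ℝ g p) :
    DifferentiableAt ℝ (fun q => f q ⬝ᵥ g q) p := by
  simp only [dotProduct]
  exact DifferentiableAt.fun_sum fun i _ => (diffAt_coord hf i).mul (diffAt_coord hg i)

lemma fderiv_dot {f g : V3 → V3} {p : V3} (hf : DifferentiableAt ℝ f p)
    (hg : DifferentiableAt ℝ g p) (u : V3) :
    fderiv ℝ (fun q => f q ⬝ᵥ g q) p u = fderiv ℝ f p u ⬝ᵥ g p + f p ⬝ᵥ fderiv ℝ g p u := by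
  simp only [dotProduct]
  rw [fderiv_fun_sum (fun i _ => (show DifferentiableAt ℝ (fun q => f q i * g q i) p from
    (diffAt_coord hf i).mul (diffAt_coord hg i)))]
  simp only [ContinuousLinearMap.sum_apply]
  have : ∀ i ∈ Finset.univ, (fderiv ℝ (fun q => f q i * g q i) p) u
      = fderiv ℝ f p u i * g p i + f p i * fderiv ℝ g p u i := by
    intro i _
    rw [fderiv_fun_mul (diffAt_coord hf i) (diffAt_coord hg i)]
    simp only [ContinuousLinearMap.add_apply, ContinuousLinearMap.smul_apply, smul_eq_mul,
      fderiv_coord hf i, fderiv_coord hg i]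
    ring
  rw [Finset.sum_congr rfl this, Finset.sum_add_distrib]


lemma shape_diff {P Z X : V3 → V3} {α β : V3 → ℝ} {p : V3}
    (hα : DifferentiableAt ℝ α p) (hβ : DifferentiableAt ℝ β p)
    (hP : DifferentiableAt ℝ P p) (hZ : DifferentiableAt ℝ Z p)
    (hX : DifferentiableAt ℝ X p) :
    DifferentiableAt ℝ (fun q => α q • X q + (β q * (P q ⬝ᵥ X q)) • Z q) p :=
  (hα.smul hX).add ((hβ.mul (diffAt_dot hP hX)).smul hZ)

lemma shape_fderiv {P Z X : V3 → V3} {α β : V3 → ℝ} {p : V3}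
    (hα : DifferentiableAt ℝ α p) (hβ : DifferentiableAt ℝ β p)
    (hP : DifferentiableAt ℝ P p) (hZ : DifferentiableAt ℝ Z p)
    (hX : DifferentiableAt ℝ X p) (u : V3) :
    fderiv ℝ (fun q => α q • X q + (β q * (P q ⬝ᵥ X q)) • Z q) p u =
      fderiv ℝ α p u • X p + α p • fderiv ℝ X p u
      + (fderiv ℝ β p u * (P p ⬝ᵥ X p)
          + β p * (fderiv ℝ P p u ⬝ᵥ X p + P p ⬝ᵥ fderiv ℝ X p u)) • Z p
      + (β p * (P p ⬝ᵥ X p)) • fderiv ℝ Z p u := by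
  have hd := diffAt_dot hP hX
  rw [fderiv_fun_add (show DifferentiableAt ℝ (fun q => α q • X q) p from hα.smul hX)
    (show DifferentiableAt ℝ (fun q => (β q * (P q ⬝ᵥ X q)) • Z q) p from (hβ.mul hd).smul hZ)]
  simp only [ContinuousLinearMap.add_apply]
  rw [fderiv_fun_smul hα hX, fderiv_fun_smul (show DifferentiableAt ℝ (fun q => β q * (P q ⬝ᵥ X q)) p from hβ.mul hd) hZ, fderiv_fun_mul hβ hd]
  simp only [ContinuousLinearMap.add_apply, ContinuousLinearMap.smul_apply,
    ContinuousLinearMap.smulRight_apply, smul_eq_mul, fderiv_dot hP hX]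
  funext i
  simp only [Pi.add_apply, Pi.smul_apply, smul_eq_mul]
  ring

lemma nij_eq {P Z : V3 → V3} {α β : V3 → ℝ} {σ : ℝ} {p : V3} (X Y : V3 → V3)
    (hP : DifferentiableAt ℝ P p) (hZ : DifferentiableAt ℝ Z p)
    (hα : DifferentiableAt ℝ α p) (hβ : DifferentiableAt ℝ β p)
    (hX : DifferentiableAt ℝ X p) (hY : DifferentiableAt ℝ Y p)
    (h0 : P p ⬝ᵥ curl3 P p = 0)
    (hμ : ∀ v, fderiv ℝ (fun q => α q + β q * (P q ⬝ᵥ Z q)) p v = σ * (P p ⬝ᵥ v)) :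
    nijT (fun q v => α q • v + (β q * (P q ⬝ᵥ v)) • Z q) X Y p
      = (β p * fderiv ℝ α p (Z p)) • ((P p ⬝ᵥ X p) • Y p - (P p ⬝ᵥ Y p) • X p) := by
  have hdz := diffAt_dot hP hZ
  have hE : ∀ v : V3, fderiv ℝ α p v + fderiv ℝ β p v * (P p ⬝ᵥ Z p)
      + β p * (fderiv ℝ P p v ⬝ᵥ Z p + P p ⬝ᵥ fderiv ℝ Z p v) = σ * (P p ⬝ᵥ v) := by
    intro v
    have h := hμ v
    rw [fderiv_fun_add hα (show DifferentiableAt ℝ (fun q => β q * (P q ⬝ᵥ Z q)) p from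
      hβ.mul hdz)] at h
    simp only [ContinuousLinearMap.add_apply] at h
    rw [fderiv_fun_mul hβ hdz] at h
    simp only [ContinuousLinearMap.add_apply, ContinuousLinearMap.smul_apply, smul_eq_mul,
      fderiv_dot hP hZ] at h
    linear_combination h
  have hG := poisson_aux hP h0 (X p) (Y p) (Z p)
  simp only [nijT, lieB]
  rw [shape_fderiv hα hβ hP hZ hX (Y p)]
  simp only [shape_fderiv hα hβ hP hZ hY, shape_fderiv hα hβ hP hZ hX]
  simp only [map_add, _root_.map_smul, map_sub, dotProduct_add, dotProduct_smul,
    add_dotProduct, smul_dotProduct, dotProduct_sub, sub_dotProduct, smul_eq_mul]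
  funext i
  simp only [Pi.add_apply, Pi.sub_apply, Pi.smul_apply, smul_eq_mul]
  linear_combination (Z p i * (β p * (P p ⬝ᵥ X p))) * hE (Y p)
    - (Z p i * (β p * (P p ⬝ᵥ Y p))) * hE (X p) - (Z p i * (β p * β p)) * hG

lemma fderiv_pow_apply {f : V3 → ℝ} {p : V3} (hf : DifferentiableAt ℝ f p) (k : ℕ) (v : V3) :
    fderiv ℝ (fun q => f q ^ k) p v = k * f p ^ (k - 1) * fderiv ℝ f p v := by
  induction k with
  | zero => simp
  | succ n ih =>
    have h1 : (fun q => f q ^ (n + 1)) = fun q => f q * f q ^ n := by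
      funext q; ring
    rw [h1, fderiv_fun_mul hf (show DifferentiableAt ℝ (fun q => f q ^ n) p from hf.pow n)]
    simp only [ContinuousLinearMap.add_apply, ContinuousLinearMap.smul_apply, smul_eq_mul, ih]
    cases n with
    | zero => simp
    | succ m =>
      simp only [Nat.add_sub_cancel, Nat.cast_add, Nat.cast_one, pow_succ]
      ring

lemma contDiff_dot {f g : V3 → V3} (hf : ContDiff ℝ (⊤ : ℕ∞) f) (hg : ContDiff ℝ (⊤ : ℕ∞) g) :
    ContDiff ℝ (⊤ : ℕ∞) (fun q => f q ⬝ᵥ g q) := by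
  simp only [dotProduct]
  exact ContDiff.sum fun i _ => (contDiff_pi.mp hf i).mul (contDiff_pi.mp hg i)

def ck (lam mu : V3 → ℝ) : ℕ → V3 → ℝ
  | 0 => fun _ => 0
  | k+1 => fun p => lam p ^ k + ck lam mu k p * mu p

lemma ck_contDiff {lam mu : V3 → ℝ} (hlam : ContDiff ℝ (⊤ : ℕ∞) lam) (hmu : ContDiff ℝ (⊤ : ℕ∞) mu) :
    ∀ k, ContDiff ℝ (⊤ : ℕ∞) (ck lam mu k) := by
  intro k
  induction k with
  | zero => exact contDiff_const
  | succ n ih => exact (hlam.pow n).add (ih.mul hmu)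

lemma ck_pow (lam : V3 → ℝ) (P Z : V3 → V3) (k : ℕ) (q : V3) :
    lam q ^ k + ck lam (fun r => lam r + P r ⬝ᵥ Z r) k q * (P q ⬝ᵥ Z q)
      = (lam q + P q ⬝ᵥ Z q) ^ k := by
  induction k with
  | zero => simp [ck]
  | succ n ih =>
    show lam q ^ (n+1) + (lam q ^ n + ck lam _ n q * (lam q + P q ⬝ᵥ Z q)) * (P q ⬝ᵥ Z q) = _
    linear_combination (lam q + P q ⬝ᵥ Z q) * ih

lemma iterN {lam : V3 → ℝ} {P Z : V3 → V3} {N : V3 → V3 → V3}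
    (hN : ∀ p v, N p v = lam p • v + (P p ⬝ᵥ v) • Z p) (k : ℕ) (p : V3) (v : V3) :
    (N p)^[k] v = lam p ^ k • v
      + (ck lam (fun r => lam r + P r ⬝ᵥ Z r) k p * (P p ⬝ᵥ v)) • Z p := by
  induction k with
  | zero => simp [ck]
  | succ n ih =>
    rw [Function.iterate_succ_apply', ih, hN]
    funext i
    simp only [ck, Pi.add_apply, Pi.smul_apply, smul_eq_mul, dotProduct_add, dotProduct_smul]
    ring

end S4

/-- The powers of `N` form a generalized Lenard–Magri chain for the
Haantjes structure `(N, θ)` with `θ = div(Z)·ξ` coming from a PqN structure on oriented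
ℝ³ with never vanishing Poisson tensor. Here `N^k` is the pointwise `k`-th power
(`k`-fold iterate) of `N`. -/
theorem stmt4
    (P : V3 → V3) (hP : ContDiff ℝ (⊤ : ℕ∞) P)
    (hPne : ∀ p, P p ≠ 0)
    (hPoisson : ∀ p, P p ⬝ᵥ curl3 P p = 0)
    (lam : V3 → ℝ) (hlam : ContDiff ℝ (⊤ : ℕ∞) lam)
    (Z : V3 → V3) (hZ : ContDiff ℝ (⊤ : ℕ∞) Z)
    (hcomp : ∀ p v, fderiv ℝ (fun q => lam q + P q ⬝ᵥ Z q) p v = div3 Z p * (P p ⬝ᵥ v))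
    (N : V3 → V3 → V3)
    (hN : ∀ p v, N p v = lam p • v + (P p ⬝ᵥ v) • Z p)
    (θ : V3 → V3 → ℝ)
    (hθ : ∀ p v, θ p v = div3 Z p * (P p ⬝ᵥ v)) :
    -- (C1) all powers of N have vanishing Haantjes torsion
    (∀ k : ℕ, ∀ X Y : V3 → V3, ContDiff ℝ (⊤ : ℕ∞) X → ContDiff ℝ (⊤ : ℕ∞) Y → ∀ p,
      haanT (fun q v => (N q)^[k] v) X Y p = 0) ∧
    -- (C2) the powers of N pairwise commute
    (∀ i j : ℕ, ∀ p v, (N p)^[i] ((N p)^[j] v) = (N p)^[j] ((N p)^[i] v)) ∧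
    -- (C3) i_{N^k}θ = (λ + ⟨ξ,Z⟩)^k · θ, and i_{N^k}θ is closed
    (∀ k : ℕ, ∀ p v, θ p ((N p)^[k] v) = (lam p + P p ⬝ᵥ Z p) ^ k * θ p v) ∧
    (∀ k : ℕ, ∀ X Y : V3 → V3, ContDiff ℝ (⊤ : ℕ∞) X → ContDiff ℝ (⊤ : ℕ∞) Y → ∀ p,
      dOne (fun q v => θ q ((N q)^[k] v)) X Y p = 0) ∧
    -- (C4) ⟨θ, T_{N^k}(X,Y)⟩ = 0
    (∀ k : ℕ, ∀ X Y : V3 → V3, ContDiff ℝ (⊤ : ℕ∞) X → ContDiff ℝ (⊤ : ℕ∞) Y → ∀ p,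
      θ p (nijT (fun q v => (N q)^[k] v) X Y p) = 0) := by
  have hPd : Differentiable ℝ P := hP.differentiable (by simp)
  have hZd : Differentiable ℝ Z := hZ.differentiable (by simp)
  have hlamd : Differentiable ℝ lam := hlam.differentiable (by simp)
  have hmuC : ContDiff ℝ (⊤ : ℕ∞) (fun q => lam q + P q ⬝ᵥ Z q) := hlam.add (S4.contDiff_dot hP hZ)
  have hmud : Differentiable ℝ (fun q => lam q + P q ⬝ᵥ Z q) := hmuC.differentiable (by simp)
  have hckC : ∀ k, ContDiff ℝ (⊤ : ℕ∞) (S4.ck lam (fun r => lam r + P r ⬝ᵥ Z r) k) :=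
    S4.ck_contDiff hlam hmuC
  -- C3a
  have hC3a : ∀ (k : ℕ) (p : V3) (v : V3),
      θ p ((N p)^[k] v) = (lam p + P p ⬝ᵥ Z p) ^ k * θ p v := by
    intro k p v
    rw [S4.iterN hN, hθ, hθ]
    simp only [dotProduct_add, dotProduct_smul, smul_eq_mul]
    linear_combination (div3 Z p * (P p ⬝ᵥ v)) * S4.ck_pow lam P Z k p
  -- derivative of μ^k hypothesis for nij_eq
  have hmuk : ∀ (k : ℕ) (p : V3) (v : V3),
      fderiv ℝ (fun q => lam q ^ k
          + S4.ck lam (fun r => lam r + P r ⬝ᵥ Z r) k q * (P q ⬝ᵥ Z q)) p v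
        = ((k : ℝ) * (lam p + P p ⬝ᵥ Z p) ^ (k - 1) * div3 Z p) * (P p ⬝ᵥ v) := by
    intro k p v
    have hfun : (fun q => lam q ^ k
        + S4.ck lam (fun r => lam r + P r ⬝ᵥ Z r) k q * (P q ⬝ᵥ Z q))
        = fun q => (lam q + P q ⬝ᵥ Z q) ^ k := funext fun q => S4.ck_pow lam P Z k q
    rw [hfun, S4.fderiv_pow_apply (hmud p) k v, hcomp p v]
    ring
  have hNkfun : ∀ k : ℕ, (fun q (v : V3) => (N q)^[k] v)
      = fun q v => (lam q ^ k) • v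
          + ((S4.ck lam (fun r => lam r + P r ⬝ᵥ Z r) k q) * (P q ⬝ᵥ v)) • Z q := by
    intro k; funext q v; exact S4.iterN hN k q v
  have key : ∀ (k : ℕ) (X Y : V3 → V3) (p : V3),
      DifferentiableAt ℝ X p → DifferentiableAt ℝ Y p →
      nijT (fun q v => (lam q ^ k) • v
          + ((S4.ck lam (fun r => lam r + P r ⬝ᵥ Z r) k q) * (P q ⬝ᵥ v)) • Z q) X Y p
        = (S4.ck lam (fun r => lam r + P r ⬝ᵥ Z r) k p
            * fderiv ℝ (fun q => lam q ^ k) p (Z p)) •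
          ((P p ⬝ᵥ X p) • Y p - (P p ⬝ᵥ Y p) • X p) := by
    intro k X Y p hXp hYp
    exact S4.nij_eq X Y (hPd p) (hZd p)
      (((hlam.pow k).differentiable (by simp)) p) (((hckC k).differentiable (by simp)) p)
      hXp hYp (hPoisson p) (hmuk k p)
  refine ⟨?_, ?_, hC3a, ?_, ?_⟩
  · -- C1 : Haantjes torsion vanishes
    intro k X Y hX hY p
    have hXd := hX.differentiable (by simp)
    have hYd := hY.differentiable (by simp)
    have hA : DifferentiableAt ℝ (fun q => (lam q ^ k) • X q
        + ((S4.ck lam (fun r => lam r + P r ⬝ᵥ Z r) k q) * (P q ⬝ᵥ X q)) • Z q) p :=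
      S4.shape_diff (((hlam.pow k).differentiable (by simp)) p)
        (((hckC k).differentiable (by simp)) p) (hPd p) (hZd p) (hXd p)
    have hB : DifferentiableAt ℝ (fun q => (lam q ^ k) • Y q
        + ((S4.ck lam (fun r => lam r + P r ⬝ᵥ Z r) k q) * (P q ⬝ᵥ Y q)) • Z q) p :=
      S4.shape_diff (((hlam.pow k).differentiable (by simp)) p)
        (((hckC k).differentiable (by simp)) p) (hPd p) (hZd p) (hYd p)
    rw [hNkfun k]
    simp only [haanT]
    rw [key k _ _ p hA hB, key k _ _ p hA (hYd p), key k _ _ p (hXd p) hB,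
      key k _ _ p (hXd p) (hYd p)]
    funext i
    simp only [dotProduct_add, dotProduct_smul, dotProduct_sub, smul_eq_mul,
      Pi.add_apply, Pi.sub_apply, Pi.smul_apply, Pi.zero_apply]
    ring
  · -- C2 : commuting powers
    intro i j p v
    rw [← Function.iterate_add_apply, ← Function.iterate_add_apply, Nat.add_comm]
  · -- C3b : closedness
    intro k X Y hX hY p
    have hXd := hX.differentiable (by simp)
    have hYd := hY.differentiable (by simp)
    set F : V3 → ℝ := fun q => ((k : ℝ) + 1)⁻¹ * (lam q + P q ⬝ᵥ Z q) ^ (k + 1) with hFdef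
    have hFC : ContDiff ℝ (⊤ : ℕ∞) F := contDiff_const.mul (hmuC.pow (k + 1))
    have hdF : ∀ (q : V3) (v : V3),
        fderiv ℝ F q v = (lam q + P q ⬝ᵥ Z q) ^ k * (div3 Z q * (P q ⬝ᵥ v)) := by
      intro q v
      rw [hFdef]
      rw [fderiv_const_mul (show DifferentiableAt ℝ (fun q => (lam q + P q ⬝ᵥ Z q) ^ (k + 1)) q from
        (hmud q).pow (k + 1))]
      simp only [ContinuousLinearMap.smul_apply, smul_eq_mul]
      rw [S4.fderiv_pow_apply (hmud q) (k + 1) v, hcomp q v, Nat.add_sub_cancel]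
      have : ((k : ℝ) + 1) ≠ 0 := by positivity
      field_simp
      push_cast
      ring
    have e1 : (fun q => θ q ((N q)^[k] (Y q))) = fun q => fderiv ℝ F q (Y q) := by
      funext q
      rw [hC3a k q (Y q), hθ, hdF q (Y q)]
    have e2 : (fun q => θ q ((N q)^[k] (X q))) = fun q => fderiv ℝ F q (X q) := by
      funext q
      rw [hC3a k q (X q), hθ, hdF q (X q)]
    have e3 : θ p ((N p)^[k] (lieB X Y p)) = fderiv ℝ F p (lieB X Y p) := by
      rw [hC3a k p (lieB X Y p), hθ, hdF p (lieB X Y p)]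
    have hdFd : Differentiable ℝ (fun q => fderiv ℝ F q) :=
      (hFC.fderiv_right (m := 1) (by exact WithTop.coe_le_coe.mpr le_top)).differentiable one_ne_zero
    simp only [dOne]
    rw [e1, e2, e3]
    rw [fderiv_clm_apply (hdFd p) (hYd p), fderiv_clm_apply (hdFd p) (hXd p)]
    have hsym : fderiv ℝ (fderiv ℝ F) p (X p) (Y p) = fderiv ℝ (fderiv ℝ F) p (Y p) (X p) :=
      (hFC.contDiffAt.isSymmSndFDerivAt (by simp; exact WithTop.coe_le_coe.mpr (le_top : (2 : ℕ∞) ≤ ⊤))) (X p) (Y p)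
    simp only [lieB, ContinuousLinearMap.add_apply, ContinuousLinearMap.comp_apply,
      ContinuousLinearMap.flip_apply, map_sub]
    rw [hsym]
    ring
  · -- C4
    intro k X Y hX hY p
    rw [hNkfun k, key k X Y p ((hX.differentiable (by simp)) p) ((hY.differentiable (by simp)) p), hθ]
    simp only [dotProduct_smul, dotProduct_sub, smul_eq_mul]
    ring
end
end

section
/- On ℝ³ let π = ∂/∂x ∧ ∂/∂y, encoded by P = (0,0,1) (so that π^♯(p)(α) = P × α^♯ and ξ = dz), and suppose N = λI + Z⊗dz is a (1,1) tensor field, with λ smooth and Z a vector field, satisfying d(λ + ⟨dz,Z⟩) = div(Z)·dz. Then there exist a smooth closed 2-form Ω on ℝ³ and a (1,1) tensor field N₁ such that T_{N₁} = 0, π and N₁ are compatible, and N = N₁ + π^♯∘Ω^♭, where Ω^♭ is the smooth map p ↦ (v ↦ Ω(p)(v,·)) (i.e., every such three-dimensional PqN structure is a deformation of a PN structure by a closed 2-form). -/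
noncomputable section

open Matrix

/-- `π^♯` for the bivector field encoded by `P`: `π^♯(p)(α) = P(p) × α^♯`. -/
def piSharp (P : V3 → V3) (p : V3) (α : V3 →L[ℝ] ℝ) : V3 :=
  crossProduct (P p) (fun i => α (Pi.single i 1))

/-- Lie derivative of the 1-form `α` along `X`, evaluated on the vector field `Y`:
`(L_X α)(Y) = X(⟨α,Y⟩) − ⟨α,[X,Y]⟩`. -/
def lieDeriv (X : V3 → V3) (α : V3 → V3 →L[ℝ] ℝ) (Y : V3 → V3) : V3 → ℝ :=
  fun p => fderiv ℝ (fun q => α q (Y q)) p (X p) - α p (lieB X Y p)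

/-- The bracket `[α,β]_Q = L_{Qα}β − L_{Qβ}α − d⟨β,Qα⟩`, evaluated on the vector field `Y`. -/
def formBr (Q : V3 → (V3 →L[ℝ] ℝ) → V3) (α β : V3 → V3 →L[ℝ] ℝ) (Y : V3 → V3) :
    V3 → ℝ :=
  fun p => lieDeriv (fun q => Q q (α q)) β Y p - lieDeriv (fun q => Q q (β q)) α Y p
    - fderiv ℝ (fun q => β q (Q q (α q))) p (Y p)

/-- Magri–Morosi concomitant
`C(π,N)(α,β) = [α,β]_{N∘π^♯} − [N*α,β]_{π^♯} − [α,N*β]_{π^♯} + N*[α,β]_{π^♯}`,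
evaluated on the vector field `Y` (the last term is the `π^♯`-bracket evaluated on `NY`). -/
def magriMorosi (P : V3 → V3) (N : V3 → V3 →L[ℝ] V3) (α β : V3 → V3 →L[ℝ] ℝ)
    (Y : V3 → V3) : V3 → ℝ :=
  fun p =>
    formBr (fun q γ => N q (piSharp P q γ)) α β Y p
    - formBr (piSharp P) (fun q => (α q).comp (N q)) β Y p
    - formBr (piSharp P) α (fun q => (β q).comp (N q)) Y p
    + formBr (piSharp P) α β (fun q => N q (Y q)) p

/-- `π` and `N` are compatible: `N∘π^♯ = π^♯∘N^*` pointwise and the Magri–Morosi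
concomitant vanishes on all smooth 1-forms (evaluated on all smooth vector fields). -/
def Compatible (P : V3 → V3) (N : V3 → V3 →L[ℝ] V3) : Prop :=
  (∀ (p : V3) (α : V3 →L[ℝ] ℝ), N p (piSharp P p α) = piSharp P p (α.comp (N p))) ∧
  (∀ α β : V3 → (V3 →L[ℝ] ℝ), ContDiff ℝ (⊤ : ℕ∞) α → ContDiff ℝ (⊤ : ℕ∞) β →
    ∀ Y : V3 → V3, ContDiff ℝ (⊤ : ℕ∞) Y → ∀ p, magriMorosi P N α β Y p = 0)

/-- Exterior derivative of a 2-form, evaluated on vector fields: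
`dΩ(X,Y,W) = X(Ω(Y,W)) − Y(Ω(X,W)) + W(Ω(X,Y)) − Ω([X,Y],W) + Ω([X,W],Y) − Ω([Y,W],X)`. -/
def dTwo (Ω : V3 → V3 →L[ℝ] V3 →L[ℝ] ℝ) (X Y W : V3 → V3) : V3 → ℝ :=
  fun p =>
    fderiv ℝ (fun q => Ω q (Y q) (W q)) p (X p)
    - fderiv ℝ (fun q => Ω q (X q) (W q)) p (Y p)
    + fderiv ℝ (fun q => Ω q (X q) (Y q)) p (W p)
    - Ω p (lieB X Y p) (W p) + Ω p (lieB X W p) (Y p) - Ω p (lieB Y W p) (X p)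

namespace S5

def E (i : Fin 3) : V3 := Pi.single i 1
def cA (L : V3 →L[ℝ] ℝ) (i : Fin 3) : ℝ := L (E i)

lemma vec_expand (v : V3) : v = v 0 • E 0 + v 1 • E 1 + v 2 • E 2 := by
  funext j; fin_cases j <;> simp [E, Pi.single_apply]

lemma clm_exp (L : V3 →L[ℝ] ℝ) (v : V3) :
    L v = v 0 * cA L 0 + v 1 * cA L 1 + v 2 * cA L 2 := by
  conv_lhs => rw [vec_expand v]
  simp [cA, smul_eq_mul]

lemma cA_comp (L : V3 →L[ℝ] ℝ) (M : V3 →L[ℝ] V3) (i : Fin 3) :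
    cA (L.comp M) i = L (M (E i)) := rfl

@[simp] lemma E_apply (i j : Fin 3) : E i j = if j = i then 1 else 0 := Pi.single_apply i 1 j

lemma fderiv_pi_app {V : V3 → V3} {p : V3} (hV : DifferentiableAt ℝ V p) (w : V3) (j : Fin 3) :
    (fderiv ℝ V p w) j = fderiv ℝ (fun q => V q j) p w := by
  have h := ((ContinuousLinearMap.proj (R := ℝ) (φ := fun _ : Fin 3 => ℝ) j).hasFDerivAt.comp p hV.hasFDerivAt)
  calc (fderiv ℝ V p w) j
      = ((ContinuousLinearMap.proj (R := ℝ) (φ := fun _ : Fin 3 => ℝ) j).comp (fderiv ℝ V p)) w := rfl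
    _ = fderiv ℝ (⇑(ContinuousLinearMap.proj (R := ℝ) (φ := fun _ : Fin 3 => ℝ) j) ∘ V) p w := by rw [h.fderiv]
    _ = fderiv ℝ (fun q => V q j) p w := rfl

@[fun_prop]
lemma cA_diff {α : V3 → V3 →L[ℝ] ℝ} (hα : Differentiable ℝ α) (j : Fin 3) :
    Differentiable ℝ (fun q => cA (α q) j) := by
  unfold cA; fun_prop

@[fun_prop]
lemma cA_diffAt {α : V3 → V3 →L[ℝ] ℝ} {p : V3} (hα : DifferentiableAt ℝ α p) (j : Fin 3) :
    DifferentiableAt ℝ (fun q => cA (α q) j) p := by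
  unfold cA; fun_prop

@[fun_prop]
lemma vec3_diff {f g h : V3 → ℝ} (hf : Differentiable ℝ f) (hg : Differentiable ℝ g)
    (hh : Differentiable ℝ h) : Differentiable ℝ (fun q => (![f q, g q, h q] : V3)) := by
  apply differentiable_pi.2
  intro i; fin_cases i <;> simpa

@[fun_prop]
lemma vec3_diffAt {f g h : V3 → ℝ} {p : V3} (hf : DifferentiableAt ℝ f p)
    (hg : DifferentiableAt ℝ g p) (hh : DifferentiableAt ℝ h p) :
    DifferentiableAt ℝ (fun q => (![f q, g q, h q] : V3)) p := by
  apply differentiableAt_pi.2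
  intro i; fin_cases i <;> simpa

-- pdc rules
lemma pdc_add {f g : V3 → ℝ} {p : V3} (hf : DifferentiableAt ℝ f p)
    (hg : DifferentiableAt ℝ g p) (i : Fin 3) :
    cA (fderiv ℝ (fun q => f q + g q) p) i = cA (fderiv ℝ f p) i + cA (fderiv ℝ g p) i := by
  unfold cA; rw [fderiv_fun_add hf hg]; rfl

lemma pdc_sub {f g : V3 → ℝ} {p : V3} (hf : DifferentiableAt ℝ f p)
    (hg : DifferentiableAt ℝ g p) (i : Fin 3) :
    cA (fderiv ℝ (fun q => f q - g q) p) i = cA (fderiv ℝ f p) i - cA (fderiv ℝ g p) i := by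
  unfold cA; rw [fderiv_fun_sub hf hg]; rfl

lemma pdc_neg {f : V3 → ℝ} {p : V3} (i : Fin 3) :
    cA (fderiv ℝ (fun q => -f q) p) i = -cA (fderiv ℝ f p) i := by
  unfold cA; rw [fderiv_fun_neg]; rfl

lemma pdc_mul {f g : V3 → ℝ} {p : V3} (hf : DifferentiableAt ℝ f p)
    (hg : DifferentiableAt ℝ g p) (i : Fin 3) :
    cA (fderiv ℝ (fun q => f q * g q) p) i
      = f p * cA (fderiv ℝ g p) i + g p * cA (fderiv ℝ f p) i := by
  unfold cA; rw [fderiv_fun_mul hf hg]; simp [mul_comm]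

lemma pdc_const {p : V3} (c : ℝ) (i : Fin 3) :
    cA (fderiv ℝ (fun _ => c) p) i = 0 := by
  unfold cA; rw [fderiv_fun_const]; rfl

lemma pdc_coord {p : V3} (j i : Fin 3) :
    cA (fderiv ℝ (fun q : V3 => q j) p) i = E i j := by
  unfold cA
  rw [show (fun q : V3 => q j) = ⇑(ContinuousLinearMap.proj (R := ℝ) (φ := fun _ : Fin 3 => ℝ) j) from rfl,
    ContinuousLinearMap.fderiv]
  rfl


def muf (lam : V3 → ℝ) (Z : V3 → V3) : V3 → ℝ := fun p => lam p + Z p 2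

def N1 (lam : V3 → ℝ) (Z : V3 → V3) : V3 → V3 →L[ℝ] V3 := fun p =>
  muf lam Z p • ContinuousLinearMap.id ℝ V3
    + (p 0 * div3 Z p) •
      (ContinuousLinearMap.proj (R := ℝ) (φ := fun _ : Fin 3 => ℝ) 2).smulRight
        (Pi.single 0 (1 : ℝ))

lemma N1_apply (lam : V3 → ℝ) (Z : V3 → V3) (p : V3) (v : V3) :
    N1 lam Z p v = ![muf lam Z p * v 0 + v 2 * (p 0 * div3 Z p),
      muf lam Z p * v 1, muf lam Z p * v 2] := by
  funext j
  fin_cases j <;>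
    simp [N1, Pi.single_apply, mul_comm]

def w2f (i j : Fin 3) : V3 →L[ℝ] V3 →L[ℝ] ℝ :=
  (ContinuousLinearMap.proj (R := ℝ) (φ := fun _ : Fin 3 => ℝ) i).smulRight
      (ContinuousLinearMap.proj (R := ℝ) (φ := fun _ : Fin 3 => ℝ) j)
    - (ContinuousLinearMap.proj (R := ℝ) (φ := fun _ : Fin 3 => ℝ) j).smulRight
      (ContinuousLinearMap.proj (R := ℝ) (φ := fun _ : Fin 3 => ℝ) i)

def Om (Z : V3 → V3) : V3 → V3 →L[ℝ] V3 →L[ℝ] ℝ := fun p =>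
  Z p 2 • w2f 0 1 + (Z p 0 - p 0 * div3 Z p) • w2f 1 2 + Z p 1 • w2f 2 0

lemma Om_apply (Z : V3 → V3) (p : V3) (v w : V3) :
    Om Z p v w = Z p 2 * (v 0 * w 1 - v 1 * w 0)
      + (Z p 0 - p 0 * div3 Z p) * (v 1 * w 2 - v 2 * w 1)
      + Z p 1 * (v 2 * w 0 - v 0 * w 2) := by
  simp [Om, w2f, smul_eq_mul]

lemma cA_Om (Z : V3 → V3) (p : V3) (v : V3) (i : Fin 3) :
    cA (Om Z p v) i = Z p 2 * (v 0 * E i 1 - v 1 * E i 0)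
      + (Z p 0 - p 0 * div3 Z p) * (v 1 * E i 2 - v 2 * E i 1)
      + Z p 1 * (v 2 * E i 0 - v 0 * E i 2) := Om_apply Z p v (E i)

lemma piSharp_eval (γ : V3 →L[ℝ] ℝ) (q : V3) :
    piSharp (fun _ => ![0, 0, 1]) q γ = ![-(cA γ 1), cA γ 0, 0] := by
  show crossProduct ![0,0,1] (fun i => γ (Pi.single i 1)) = _
  rw [cross_apply]
  funext j; fin_cases j <;> simp [cA, E]

@[fun_prop]
lemma div3_contDiff {Z : V3 → V3} (hZ : ContDiff ℝ (⊤ : ℕ∞) Z) : ContDiff ℝ (⊤ : ℕ∞) (div3 Z) := by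
  have h : ContDiff ℝ (⊤ : ℕ∞) (fderiv ℝ Z) := hZ.fderiv_right (by simp)
  have h2 : ∀ (v : V3) (j : Fin 3), ContDiff ℝ (⊤ : ℕ∞) (fun p => fderiv ℝ Z p v j) := by
    intro v j
    exact (contDiff_pi.1 (h.clm_apply contDiff_const)) j
  have : div3 Z = fun p => fderiv ℝ Z p (Pi.single 0 1) 0 + fderiv ℝ Z p (Pi.single 1 1) 1
      + fderiv ℝ Z p (Pi.single 2 1) 2 := by
    funext p; simp [div3, Fin.sum_univ_three]
  rw [this]
  fun_prop

@[fun_prop]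
lemma muf_contDiff {lam : V3 → ℝ} {Z : V3 → V3} (hlam : ContDiff ℝ (⊤ : ℕ∞) lam)
    (hZ : ContDiff ℝ (⊤ : ℕ∞) Z) : ContDiff ℝ (⊤ : ℕ∞) (muf lam Z) := by
  unfold muf; fun_prop

@[fun_prop]
lemma N1_contDiff {lam : V3 → ℝ} {Z : V3 → V3} (hlam : ContDiff ℝ (⊤ : ℕ∞) lam)
    (hZ : ContDiff ℝ (⊤ : ℕ∞) Z) : ContDiff ℝ (⊤ : ℕ∞) (N1 lam Z) := by
  unfold N1
  have h1 : ContDiff ℝ (⊤ : ℕ∞) (muf lam Z) := muf_contDiff hlam hZ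
  have h2 : ContDiff ℝ (⊤ : ℕ∞) (div3 Z) := div3_contDiff hZ
  fun_prop

@[fun_prop]
lemma Om_contDiff {Z : V3 → V3} (hZ : ContDiff ℝ (⊤ : ℕ∞) Z) : ContDiff ℝ (⊤ : ℕ∞) (Om Z) := by
  unfold Om
  have h2 : ContDiff ℝ (⊤ : ℕ∞) (div3 Z) := div3_contDiff hZ
  have h3 : ∀ i, ContDiff ℝ (⊤ : ℕ∞) (fun p => Z p i) := fun i => contDiff_pi.1 hZ i
  change ContDiff ℝ (⊤ : ℕ∞) (Om Z)
  refine contDiff_clm_apply_iff.2 fun v => contDiff_clm_apply_iff.2 fun w => ?_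
  simp only [Om_apply]
  fun_prop

end S5

set_option maxHeartbeats 4000000 in
/-- Every PqN structure on ℝ³ with `π = ∂x∧∂y` (encoded by
`P = (0,0,1)`, so `ξ = dz`) and `N = λI + Z⊗dz` is the deformation of a PN structure
`(π, N₁)` by a closed 2-form `Ω`: `N = N₁ + π^♯∘Ω^♭`. -/
theorem stmt5
    (lam : V3 → ℝ) (hlam : ContDiff ℝ (⊤ : ℕ∞) lam)
    (Z : V3 → V3) (hZ : ContDiff ℝ (⊤ : ℕ∞) Z)
    (N : V3 → V3 →L[ℝ] V3) (hNsmooth : ContDiff ℝ (⊤ : ℕ∞) N)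
    (hN : ∀ p v, N p v = lam p • v + v 2 • Z p)
    (hcomp : ∀ p v, fderiv ℝ (fun q => lam q + Z q 2) p v = div3 Z p * v 2) :
    ∃ (Ω : V3 → V3 →L[ℝ] V3 →L[ℝ] ℝ) (N₁ : V3 → V3 →L[ℝ] V3),
      ContDiff ℝ (⊤ : ℕ∞) Ω ∧
      -- Ω is alternating
      (∀ p v, Ω p v v = 0) ∧
      -- Ω is closed
      (∀ X Y W : V3 → V3, ContDiff ℝ (⊤ : ℕ∞) X → ContDiff ℝ (⊤ : ℕ∞) Y → ContDiff ℝ (⊤ : ℕ∞) W → ∀ p,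
        dTwo Ω X Y W p = 0) ∧
      ContDiff ℝ (⊤ : ℕ∞) N₁ ∧
      -- N₁ is torsion free
      (∀ X Y : V3 → V3, ContDiff ℝ (⊤ : ℕ∞) X → ContDiff ℝ (⊤ : ℕ∞) Y → ∀ p,
        nijT (fun q v => N₁ q v) X Y p = 0) ∧
      -- π and N₁ are compatible
      Compatible (fun _ => ![0, 0, 1]) N₁ ∧
      -- N = N₁ + π^♯ ∘ Ω^♭
      (∀ p v, N p v = N₁ p v + piSharp (fun _ => ![0, 0, 1]) p (Ω p v)) := by
  classical
  have hZd : Differentiable ℝ Z := hZ.differentiable (by simp)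
  have hlamd : Differentiable ℝ lam := hlam.differentiable (by simp)
  have hdfC : ContDiff ℝ (⊤ : ℕ∞) (div3 Z) := S5.div3_contDiff hZ
  have hdfd : Differentiable ℝ (div3 Z) := hdfC.differentiable (by simp)
  have hmufC : ContDiff ℝ (⊤ : ℕ∞) (S5.muf lam Z) := S5.muf_contDiff hlam hZ
  have hmufd : Differentiable ℝ (S5.muf lam Z) := hmufC.differentiable (by simp)
  have hcomp' : ∀ p v, fderiv ℝ (S5.muf lam Z) p v = div3 Z p * v 2 := hcomp
  have hmu : ∀ p (i : Fin 3), S5.cA (fderiv ℝ (S5.muf lam Z) p) i = div3 Z p * S5.E i 2 :=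
    fun p i => hcomp' p (S5.E i)
  have hdfun : div3 Z = fun q => fderiv ℝ (S5.muf lam Z) q (S5.E 2) := by
    funext q; rw [hcomp']; simp [S5.E]
  have hfd2 : ∀ p, DifferentiableAt ℝ (fderiv ℝ (S5.muf lam Z)) p :=
    fun p => ((hmufC.fderiv_right (m := (⊤ : ℕ∞)) (by simp)).differentiable (by simp)) p
  have hsym : ∀ p, IsSymmSndFDerivAt ℝ (S5.muf lam Z) p :=
    fun p => (hmufC.contDiffAt).isSymmSndFDerivAt (by rw [minSmoothness_of_isRCLikeNormedField]; exact WithTop.coe_le_coe.2 (le_top : (2 : ℕ∞) ≤ ⊤))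
  have sndSwap : ∀ p v w, fderiv ℝ (fun q => fderiv ℝ (S5.muf lam Z) q w) p v
      = fderiv ℝ (fun q => fderiv ℝ (S5.muf lam Z) q v) p w := by
    intro p v w
    have e : ∀ u : V3, fderiv ℝ (fun q => fderiv ℝ (S5.muf lam Z) q u) p
        = (fderiv ℝ (fderiv ℝ (S5.muf lam Z)) p).flip u := by
      intro u
      rw [fderiv_clm_apply (hfd2 p) (differentiableAt_const u)]
      simp
    rw [e w, e v]
    exact hsym p v w
  have hdf01 : ∀ (i : Fin 3), S5.E i 2 = 0 → ∀ p, S5.cA (fderiv ℝ (div3 Z) p) i = 0 := by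
    intro i hi p
    show fderiv ℝ (div3 Z) p (S5.E i) = 0
    conv_lhs => rw [hdfun]
    rw [sndSwap p (S5.E i) (S5.E 2)]
    rw [show (fun q => fderiv ℝ (S5.muf lam Z) q (S5.E i)) = (fun _ => (0:ℝ)) from
      funext fun q => by rw [hcomp', hi, mul_zero]]
    simp
  have hdf0 : ∀ p, S5.cA (fderiv ℝ (div3 Z) p) 0 = 0 := hdf01 0 (by simp [S5.E])
  have hdf1 : ∀ p, S5.cA (fderiv ℝ (div3 Z) p) 1 = 0 := hdf01 1 (by simp [S5.E])
  have hdiv3 : ∀ p, div3 Z p = S5.cA (fderiv ℝ (fun q => Z q 0) p) 0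
      + S5.cA (fderiv ℝ (fun q => Z q 1) p) 1 + S5.cA (fderiv ℝ (fun q => Z q 2) p) 2 := by
    intro p
    have h := fun (w : V3) (j : Fin 3) => S5.fderiv_pi_app (hZd p) w j
    simp [div3, Fin.sum_univ_three, h, S5.cA, S5.E]
  refine ⟨S5.Om Z, S5.N1 lam Z, S5.Om_contDiff hZ, ?_, ?_, S5.N1_contDiff hlam hZ, ?_, ⟨?_, ?_⟩, ?_⟩
  · -- alternating
    intro p v
    rw [S5.Om_apply]; ring
  · -- closed
    intro X Y W hX hY hW p
    have hXd : Differentiable ℝ X := hX.differentiable (by simp)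
    have hYd : Differentiable ℝ Y := hY.differentiable (by simp)
    have hWd : Differentiable ℝ W := hW.differentiable (by simp)
    simp (disch := fun_prop) only [dTwo, lieB, S5.Om_apply, S5.cA_Om, S5.clm_exp, S5.cA_comp,
      S5.fderiv_pi_app, S5.pdc_add, S5.pdc_sub, S5.pdc_neg, S5.pdc_mul, S5.pdc_const,
      S5.pdc_coord, S5.E_apply, Pi.sub_apply, Pi.add_apply, smul_eq_mul,
      Fin.reduceEq, Fin.reduceFinMk, reduceIte,
      mul_zero, mul_one, zero_mul, one_mul, sub_zero, zero_sub, add_zero, zero_add, neg_neg,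
      hdf0, hdf1]
    linear_combination (-(X p 0 * (Y p 1 * W p 2 - Y p 2 * W p 1))
      + X p 1 * (Y p 0 * W p 2 - Y p 2 * W p 0)
      - X p 2 * (Y p 0 * W p 1 - Y p 1 * W p 0)) * (hdiv3 p)
  · -- torsion free
    intro X Y hX hY p
    have hXd : Differentiable ℝ X := hX.differentiable (by simp)
    have hYd : Differentiable ℝ Y := hY.differentiable (by simp)
    funext j
    fin_cases j <;>
    · simp (disch := fun_prop) only [nijT, lieB, S5.N1_apply, S5.clm_exp, S5.cA_comp,
        S5.fderiv_pi_app, S5.pdc_add, S5.pdc_sub, S5.pdc_neg, S5.pdc_mul, S5.pdc_const,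
        S5.pdc_coord, S5.E_apply, Pi.sub_apply, Pi.add_apply, Pi.zero_apply, smul_eq_mul,
        Fin.reduceEq, Fin.reduceFinMk, reduceIte,
        Matrix.cons_val_zero, Matrix.cons_val_one, Matrix.head_cons, Matrix.cons_val_two,
        Matrix.tail_cons, Fin.isValue,
        mul_zero, mul_one, zero_mul, one_mul, sub_zero, zero_sub, add_zero, zero_add, neg_neg,
        hmu, hdf0, hdf1]
      ring
  · -- algebraic compatibility
    intro p γ
    funext j
    fin_cases j <;>
    · simp only [S5.piSharp_eval, S5.N1_apply, S5.clm_exp, S5.cA_comp, S5.E_apply,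
        Fin.reduceEq, Fin.reduceFinMk, reduceIte,
        Matrix.cons_val_zero, Matrix.cons_val_one, Matrix.head_cons, Matrix.cons_val_two,
        Matrix.tail_cons, Fin.isValue,
        mul_zero, mul_one, zero_mul, one_mul, sub_zero, zero_sub, add_zero, zero_add, neg_neg]
      try ring
  · -- Magri-Morosi
    intro α β hα hβ Y hY p
    have hαd : Differentiable ℝ α := hα.differentiable (by simp)
    have hβd : Differentiable ℝ β := hβ.differentiable (by simp)
    have hYd : Differentiable ℝ Y := hY.differentiable (by simp)
    simp (disch := fun_prop) only [magriMorosi, formBr, lieDeriv, lieB, S5.piSharp_eval,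
      S5.N1_apply, S5.clm_exp, S5.cA_comp, S5.fderiv_pi_app,
      S5.pdc_add, S5.pdc_sub, S5.pdc_neg, S5.pdc_mul, S5.pdc_const, S5.pdc_coord, S5.E_apply,
      Pi.sub_apply, Pi.add_apply, Pi.zero_apply, smul_eq_mul,
      Fin.reduceEq, Fin.reduceFinMk, reduceIte,
      Matrix.cons_val_zero, Matrix.cons_val_one, Matrix.head_cons, Matrix.cons_val_two,
      Matrix.tail_cons, Fin.isValue,
      mul_zero, mul_one, zero_mul, one_mul, sub_zero, zero_sub, add_zero, zero_add, neg_neg,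
      hmu, hdf0, hdf1]
    ring
  · -- decomposition
    intro p v
    funext j
    fin_cases j <;>
    · simp only [hN, S5.piSharp_eval, S5.cA_Om, S5.N1_apply, S5.E_apply,
        Pi.add_apply, Pi.smul_apply, smul_eq_mul,
        Fin.reduceEq, Fin.reduceFinMk, reduceIte,
        Matrix.cons_val_zero, Matrix.cons_val_one, Matrix.head_cons, Matrix.cons_val_two,
        Matrix.tail_cons, Fin.isValue,
        mul_zero, mul_one, zero_mul, one_mul, sub_zero, zero_sub, add_zero, zero_add, neg_neg]
      simp only [S5.muf]
      ring
end
end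

section
/- Let ξ be a 1-form, Z a vector field and λ a smooth function on ℝ³ such that (ξ∧dξ)(W,X,Y) = 0 for all vector fields W, X, Y and d(λ + ⟨ξ,Z⟩) = div(Z)·ξ, and set N = λI + Z⊗ξ. Then for every integer k ≥ 0 and every vector field X, the pointwise endomorphism (i_XT_N)(p) : v ↦ T_N(X, c_v)(p) (where c_v is the constant vector field with value v) satisfies (1/2)·Tr(N(p)^k ∘ (i_XT_N)(p)) = Z(λ)(p)·λ(p)^k·ξ(p)(X(p)), i.e., the 1-form φ_k with ⟨φ_k, X⟩ = (1/2)Tr(N^k(i_XT_N)) equals Z(λ)·λ^k·ξ. -/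
noncomputable section

open Matrix

/-- Exterior derivative of a 1-form, evaluated on vector fields. -/
def dOneL (ξ : V3 → V3 →L[ℝ] ℝ) (X Y : V3 → V3) : V3 → ℝ :=
  fun p => fderiv ℝ (fun q => ξ q (Y q)) p (X p) - fderiv ℝ (fun q => ξ q (X q)) p (Y p)
    - ξ p (lieB X Y p)

/-- `(ξ∧dξ)(W,X,Y) = ⟨ξ,W⟩dξ(X,Y) − ⟨ξ,X⟩dξ(W,Y) + ⟨ξ,Y⟩dξ(W,X)`. -/
def xiWedgeDxi (ξ : V3 → V3 →L[ℝ] ℝ) (W X Y : V3 → V3) : V3 → ℝ :=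
  fun p => ξ p (W p) * dOneL ξ X Y p - ξ p (X p) * dOneL ξ W Y p
    + ξ p (Y p) * dOneL ξ W X p

/-- auxiliary 1-form `c` appearing as the `Z`-coefficient of the torsion. -/
def ccForm (ξ : V3 → V3 →L[ℝ] ℝ) (Z : V3 → V3) (lam : V3 → ℝ) (X : V3 → V3) (p : V3) :
    V3 →L[ℝ] ℝ :=
  (ξ p (X p)) • (fderiv ℝ ξ p (Z p)) + (ξ p (X p)) • (fderiv ℝ lam p)
  + (ξ p (X p)) • ((ξ p).comp (fderiv ℝ Z p))
  + (-(fderiv ℝ ξ p (Z p) (X p)) - fderiv ℝ lam p (X p) - ξ p (fderiv ℝ Z p (X p))) • (ξ p)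
  + (ξ p (Z p)) • ((fderiv ℝ ξ p).flip (X p))
  - (ξ p (Z p)) • (fderiv ℝ ξ p (X p))

lemma sum_single_mul (f : V3 →L[ℝ] ℝ) (w : V3) :
    ∑ i, f (Pi.single i 1) * w i = f w := by
  have h : w = ∑ i, w i • (Pi.single i 1 : V3) := by
    funext j; simp [Pi.single_apply]
  conv_rhs => rw [h]
  rw [_root_.map_sum]
  simp [mul_comm]

lemma fderiv_field_comb {ξ : V3 → V3 →L[ℝ] ℝ} {Z Y : V3 → V3} {lam : V3 → ℝ} {p : V3}
    (hξ : DifferentiableAt ℝ ξ p) (hZ : DifferentiableAt ℝ Z p) (hY : DifferentiableAt ℝ Y p)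
    (hlam : DifferentiableAt ℝ lam p) (w : V3) :
    fderiv ℝ (fun q => lam q • Y q + ξ q (Y q) • Z q) p w
      = fderiv ℝ lam p w • Y p + lam p • fderiv ℝ Y p w
        + (fderiv ℝ ξ p w (Y p) + ξ p (fderiv ℝ Y p w)) • Z p
        + ξ p (Y p) • fderiv ℝ Z p w := by
  have h : HasFDerivAt (fun q => lam q • Y q + ξ q (Y q) • Z q)
      ((lam p • fderiv ℝ Y p + (fderiv ℝ lam p).smulRight (Y p))
        + ((ξ p (Y p)) • fderiv ℝ Z p
            + (((ξ p).comp (fderiv ℝ Y p) + (fderiv ℝ ξ p).flip (Y p)).smulRight (Z p)))) p :=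
    (hlam.hasFDerivAt.smul hY.hasFDerivAt).add
      ((hξ.hasFDerivAt.clm_apply hY.hasFDerivAt).smul hZ.hasFDerivAt)
  rw [h.fderiv]
  simp [add_smul]
  module

/-- pointwise formula for the Nijenhuis torsion of `N = λI + Z⊗ξ` against a constant field. -/
lemma key_formula
    (ξ : V3 → V3 →L[ℝ] ℝ) (hξ : ContDiff ℝ (⊤ : ℕ∞) ξ)
    (Z : V3 → V3) (hZ : ContDiff ℝ (⊤ : ℕ∞) Z)
    (lam : V3 → ℝ) (hlam : ContDiff ℝ (⊤ : ℕ∞) lam)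
    (N : V3 → V3 → V3)
    (hN : ∀ p v, N p v = lam p • v + ξ p v • Z p)
    (X : V3 → V3) (hX : ContDiff ℝ (⊤ : ℕ∞) X) (p : V3) (v : V3) :
    nijT N X (fun _ => v) p =
      (fderiv ℝ lam p (Z p) * ξ p (X p)) • v
      - (fderiv ℝ lam p (Z p) * ξ p v) • X p
      + (ccForm ξ Z lam X p v) • Z p := by
  have dξ : DifferentiableAt ℝ ξ p := (hξ.differentiable (by simp)) p
  have dZ : DifferentiableAt ℝ Z p := (hZ.differentiable (by simp)) p
  have dX : DifferentiableAt ℝ X p := (hX.differentiable (by simp)) p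
  have dlam : DifferentiableAt ℝ lam p := (hlam.differentiable (by simp)) p
  have dv : DifferentiableAt ℝ (fun _ : V3 => v) p := differentiableAt_const v
  have hconstd : ∀ w : V3, fderiv ℝ (fun _ : V3 => v) p w = 0 := by
    intro w; rw [fderiv_fun_const]; simp
  have hDA : ∀ w, fderiv ℝ (fun q => lam q • X q + ξ q (X q) • Z q) p w
      = fderiv ℝ lam p w • X p + lam p • fderiv ℝ X p w
        + (fderiv ℝ ξ p w (X p) + ξ p (fderiv ℝ X p w)) • Z p
        + ξ p (X p) • fderiv ℝ Z p w := by
    intro w; exact fderiv_field_comb dξ dZ dX dlam w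
  have hDB : ∀ w, fderiv ℝ (fun q => lam q • v + ξ q v • Z q) p w
      = fderiv ℝ lam p w • v
        + (fderiv ℝ ξ p w v) • Z p
        + ξ p v • fderiv ℝ Z p w := by
    intro w
    rw [fderiv_field_comb dξ dZ dv dlam w]
    rw [fderiv_fun_const]; simp
  simp only [nijT, lieB, hN]
  simp only [hDA, hDB, hconstd]
  simp only [_root_.map_add, _root_.map_smul, _root_.map_sub, ContinuousLinearMap.add_apply,
    ContinuousLinearMap.smul_apply, smul_eq_mul, ccForm, ContinuousLinearMap.sub_apply,
    ContinuousLinearMap.coe_smul', Pi.smul_apply, ContinuousLinearMap.coe_comp',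
    Function.comp_apply, ContinuousLinearMap.flip_apply, ContinuousLinearMap.neg_apply,
    zero_sub, _root_.map_neg, _root_.map_zero, neg_zero, add_zero, zero_add, sub_zero]
  module

/-- On a three-dimensional oriented PqN manifold with
`N = λI + Z⊗ξ`, the 1-forms `φ_k` defined by `⟨φ_k,X⟩ = (1/2)Tr(N^k(i_X T_N))`
equal `Z(λ)·λ^k·ξ`.  The trace of the endomorphism `N(p)^k ∘ (i_X T_N)(p)` is computed
in the standard basis `e_i = Pi.single i 1`, and `(i_X T_N)(p)(v) = T_N(X, c_v)(p)`
with `c_v` the constant vector field with value `v`. -/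
theorem stmt7
    (ξ : V3 → V3 →L[ℝ] ℝ) (hξ : ContDiff ℝ (⊤ : ℕ∞) ξ)
    (Z : V3 → V3) (hZ : ContDiff ℝ (⊤ : ℕ∞) Z)
    (lam : V3 → ℝ) (hlam : ContDiff ℝ (⊤ : ℕ∞) lam)
    (hwedge : ∀ W X Y : V3 → V3, ContDiff ℝ (⊤ : ℕ∞) W → ContDiff ℝ (⊤ : ℕ∞) X → ContDiff ℝ (⊤ : ℕ∞) Y →
      ∀ p, xiWedgeDxi ξ W X Y p = 0)
    (hcomp : ∀ p v, fderiv ℝ (fun q => lam q + ξ q (Z q)) p v = div3 Z p * ξ p v)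
    (N : V3 → V3 → V3)
    (hN : ∀ p v, N p v = lam p • v + ξ p v • Z p) :
    ∀ k : ℕ, ∀ X : V3 → V3, ContDiff ℝ (⊤ : ℕ∞) X → ∀ p,
      (1 / 2 : ℝ) * ∑ i, ((N p)^[k] (nijT N X (fun _ => Pi.single i 1) p)) i
        = fderiv ℝ lam p (Z p) * lam p ^ k * ξ p (X p) := by
  intro k X hX p
  have dξ : DifferentiableAt ℝ ξ p := (hξ.differentiable (by simp)) p
  have dZ : DifferentiableAt ℝ Z p := (hZ.differentiable (by simp)) p
  have dlam : DifferentiableAt ℝ lam p := (hlam.differentiable (by simp)) p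
  -- the compatibility hypothesis, unfolded
  have hcomp' : ∀ w : V3,
      fderiv ℝ lam p w + (ξ p (fderiv ℝ Z p w) + fderiv ℝ ξ p w (Z p))
        = div3 Z p * ξ p w := by
    intro w
    have h : HasFDerivAt (fun q => lam q + ξ q (Z q))
        (fderiv ℝ lam p + ((ξ p).comp (fderiv ℝ Z p) + (fderiv ℝ ξ p).flip (Z p))) p :=
      dlam.hasFDerivAt.add (dξ.hasFDerivAt.clm_apply dZ.hasFDerivAt)
    have := hcomp p w
    rw [h.fderiv] at this
    simpa using this
  -- the `Z`-coefficient of the torsion vanishes on `Z`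
  have ccZ : ccForm ξ Z lam X p (Z p) = 0 := by
    have h1 := hcomp' (Z p)
    have h2 := hcomp' (X p)
    simp only [ccForm, ContinuousLinearMap.add_apply, ContinuousLinearMap.sub_apply,
      ContinuousLinearMap.smul_apply, smul_eq_mul, ContinuousLinearMap.coe_smul',
      Pi.smul_apply, ContinuousLinearMap.coe_comp', Function.comp_apply,
      ContinuousLinearMap.flip_apply, ContinuousLinearMap.neg_apply]
    linear_combination ξ p (X p) * h1 - ξ p (Z p) * h2
  -- closed form for the iterates of `N p`
  have hNk : ∀ m : ℕ, ∃ μ : ℝ, ∀ w : V3,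
      (N p)^[m] w = (lam p ^ m) • w + (μ * ξ p w) • Z p := by
    intro m
    induction m with
    | zero => exact ⟨0, fun w => by simp⟩
    | succ m ih =>
      obtain ⟨μ, hμ⟩ := ih
      refine ⟨lam p ^ m + (lam p + ξ p (Z p)) * μ, fun w => ?_⟩
      rw [Function.iterate_succ_apply, hN p w, hμ]
      simp only [_root_.map_add, _root_.map_smul, smul_eq_mul, pow_succ]
      module
  obtain ⟨μ, hμ⟩ := hNk k
  set dZl := fderiv ℝ lam p (Z p) with hdZl
  set x := ξ p (X p) with hx
  have hs : ∑ i, ((N p)^[k] (nijT N X (fun _ => Pi.single i 1) p)) i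
      = ∑ i, ((lam p ^ k * (dZl * x))
          + (-(lam p ^ k * dZl)) * (ξ p (Pi.single i 1) * X p i)
          + (lam p ^ k + μ * ξ p (Z p)) * (ccForm ξ Z lam X p (Pi.single i 1) * Z p i)) := by
    refine Finset.sum_congr rfl fun i _ => ?_
    rw [key_formula ξ hξ Z hZ lam hlam N hN X hX p (Pi.single i 1), hμ]
    simp only [_root_.map_add, _root_.map_sub, _root_.map_smul, smul_eq_mul, Pi.add_apply, Pi.sub_apply,
      Pi.smul_apply, Pi.single_eq_same, mul_one]
    ring
  rw [hs]
  rw [Finset.sum_add_distrib, Finset.sum_add_distrib, Finset.sum_const, ← Finset.mul_sum,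
    ← Finset.mul_sum, sum_single_mul (ξ p) (X p), sum_single_mul (ccForm ξ Z lam X p) (Z p),
    ccZ, ← hx]
  simp only [Finset.card_univ, Fintype.card_fin, nsmul_eq_mul, Nat.cast_ofNat]
  ring
end
end

section
/- Let ξ be a 1-form, Z a vector field and λ a smooth function on ℝ³ such that (ξ∧dξ)(W,X,Y) = 0 for all vector fields W, X, Y, and set N = λI + Z⊗ξ. Then the Nijenhuis torsion of N is given by T_N(X,Y) = (ξ∧d(λ+⟨ξ,Z⟩))(X,Y)·Z + Z(λ)·(⟨ξ,X⟩Y − ⟨ξ,Y⟩X) for all vector fields X, Y. -/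
noncomputable section

open Matrix

/-- For `N = λI + Z⊗ξ` with `ξ∧dξ = 0`, the Nijenhuis torsion of `N` is
`T_N(X,Y) = (ξ∧d(λ+⟨ξ,Z⟩))(X,Y)·Z + Z(λ)·(⟨ξ,X⟩Y − ⟨ξ,Y⟩X)`, where for 1-forms
`(α∧β)(X,Y) = ⟨α,X⟩⟨β,Y⟩ − ⟨α,Y⟩⟨β,X⟩`. -/
theorem stmt8
    (ξ : V3 → V3 →L[ℝ] ℝ) (hξ : ContDiff ℝ (⊤ : ℕ∞) ξ)
    (Z : V3 → V3) (hZ : ContDiff ℝ (⊤ : ℕ∞) Z)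
    (lam : V3 → ℝ) (hlam : ContDiff ℝ (⊤ : ℕ∞) lam)
    (hwedge : ∀ W X Y : V3 → V3, ContDiff ℝ (⊤ : ℕ∞) W → ContDiff ℝ (⊤ : ℕ∞) X → ContDiff ℝ (⊤ : ℕ∞) Y →
      ∀ p, xiWedgeDxi ξ W X Y p = 0)
    (N : V3 → V3 → V3)
    (hN : ∀ p v, N p v = lam p • v + ξ p v • Z p) :
    ∀ X Y : V3 → V3, ContDiff ℝ (⊤ : ℕ∞) X → ContDiff ℝ (⊤ : ℕ∞) Y → ∀ p,
      nijT N X Y p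
        = (ξ p (X p) * fderiv ℝ (fun q => lam q + ξ q (Z q)) p (Y p)
            - ξ p (Y p) * fderiv ℝ (fun q => lam q + ξ q (Z q)) p (X p)) • Z p
          + fderiv ℝ lam p (Z p) • (ξ p (X p) • Y p - ξ p (Y p) • X p) := by
  intro X Y hX hY p
  have hξd : DifferentiableAt ℝ ξ p := (hξ.differentiable (by simp)) p
  have hZd : DifferentiableAt ℝ Z p := (hZ.differentiable (by simp)) p
  have hld : DifferentiableAt ℝ lam p := (hlam.differentiable (by simp)) p
  -- derivative of ⟨ξ, W⟩
  have keyc : ∀ (W : V3 → V3), ContDiff ℝ (⊤ : ℕ∞) W → ∀ v,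
      fderiv ℝ (fun q => ξ q (W q)) p v
        = fderiv ℝ ξ p v (W p) + ξ p (fderiv ℝ W p v) := by
    intro W hW v
    have hWd : DifferentiableAt ℝ W p := (hW.differentiable (by simp)) p
    rw [fderiv_clm_apply hξd hWd]
    simp [ContinuousLinearMap.add_apply, ContinuousLinearMap.flip_apply,
      ContinuousLinearMap.comp_apply, add_comm]
  -- derivative of the N-image of a field
  have key : ∀ (W : V3 → V3), ContDiff ℝ (⊤ : ℕ∞) W → ∀ v,
      fderiv ℝ (fun q => lam q • W q + ξ q (W q) • Z q) p v
        = fderiv ℝ lam p v • W p + lam p • fderiv ℝ W p v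
          + (fderiv ℝ ξ p v (W p) + ξ p (fderiv ℝ W p v)) • Z p
          + ξ p (W p) • fderiv ℝ Z p v := by
    intro W hW v
    have hWd : DifferentiableAt ℝ W p := (hW.differentiable (by simp)) p
    have hc : DifferentiableAt ℝ (fun q => ξ q (W q)) p :=
      ((hξ.clm_apply hW).differentiable (by simp)) p
    rw [fderiv_fun_add (f := fun q => lam q • W q) (g := fun q => ξ q (W q) • Z q)
      (hld.smul hWd) (hc.smul hZd), fderiv_fun_smul hld hWd,
      fderiv_fun_smul hc hZd, fderiv_clm_apply hξd hWd]
    simp [ContinuousLinearMap.add_apply, ContinuousLinearMap.smul_apply,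
      ContinuousLinearMap.smulRight_apply, ContinuousLinearMap.flip_apply,
      ContinuousLinearMap.comp_apply, add_smul]
    module
  -- derivative of lam + ⟨ξ, Z⟩
  have keyadd : ∀ v, fderiv ℝ (fun q => lam q + ξ q (Z q)) p v
      = fderiv ℝ lam p v + (fderiv ℝ ξ p v (Z p) + ξ p (fderiv ℝ Z p v)) := by
    intro v
    have hc : DifferentiableAt ℝ (fun q => ξ q (Z q)) p :=
      ((hξ.clm_apply hZ).differentiable (by simp)) p
    rw [fderiv_fun_add hld hc]
    simp [keyc Z hZ v]
  -- the wedge hypothesis at p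
  have hw := hwedge Z X Y hZ hX hY p
  simp only [xiWedgeDxi, dOneL, lieB, keyc X hX, keyc Y hY, keyc Z hZ, map_sub] at hw
  ring_nf at hw
  -- main computation
  have hNX : (fun q => N q (X q)) = fun q => lam q • X q + ξ q (X q) • Z q :=
    funext fun q => hN q (X q)
  have hNY : (fun q => N q (Y q)) = fun q => lam q • Y q + ξ q (Y q) • Z q :=
    funext fun q => hN q (Y q)
  simp only [nijT, lieB, hNX, hNY, hN, keyadd]
  simp only [key X hX, key Y hY, map_add, _root_.map_smul, map_sub,
    ContinuousLinearMap.add_apply, ContinuousLinearMap.smul_apply, smul_eq_mul,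
    smul_add, smul_sub, add_smul, sub_smul, smul_smul]
  match_scalars <;> first
  | ring1
  | linear_combination -hw
end
end

section
/- Let ξ be a 1-form, Z a vector field and λ a smooth function on ℝ³ such that (ξ∧dξ)(W,X,Y) = 0 for all vector fields W, X, Y and d(λ + ⟨ξ,Z⟩) = div(Z)·ξ, and set N = λI + Z⊗ξ. Then T_N(X,Y) = Z(λ)·(⟨ξ,X⟩Y − ⟨ξ,Y⟩X) for all vector fields X, Y. -/
noncomputable section

open Matrix

/-- Under the hypotheses of a three-dimensional oriented PqN manifold
(`ξ∧dξ = 0` and `d(λ+⟨ξ,Z⟩) = div(Z)·ξ`), the Nijenhuis torsion of `N = λI + Z⊗ξ` is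
`T_N(X,Y) = Z(λ)·(⟨ξ,X⟩Y − ⟨ξ,Y⟩X)`. -/
theorem stmt9
    (ξ : V3 → V3 →L[ℝ] ℝ) (hξ : ContDiff ℝ (⊤ : ℕ∞) ξ)
    (Z : V3 → V3) (hZ : ContDiff ℝ (⊤ : ℕ∞) Z)
    (lam : V3 → ℝ) (hlam : ContDiff ℝ (⊤ : ℕ∞) lam)
    (hwedge : ∀ W X Y : V3 → V3, ContDiff ℝ (⊤ : ℕ∞) W → ContDiff ℝ (⊤ : ℕ∞) X → ContDiff ℝ (⊤ : ℕ∞) Y →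
      ∀ p, xiWedgeDxi ξ W X Y p = 0)
    (hcomp : ∀ p v, fderiv ℝ (fun q => lam q + ξ q (Z q)) p v = div3 Z p * ξ p v)
    (N : V3 → V3 → V3)
    (hN : ∀ p v, N p v = lam p • v + ξ p v • Z p) :
    ∀ X Y : V3 → V3, ContDiff ℝ (⊤ : ℕ∞) X → ContDiff ℝ (⊤ : ℕ∞) Y → ∀ p,
      nijT N X Y p
        = fderiv ℝ lam p (Z p) • (ξ p (X p) • Y p - ξ p (Y p) • X p) := by
  intro X Y hX hY p
  have h1 : DifferentiableAt ℝ lam p := hlam.differentiable (by simp) p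
  have h3 : DifferentiableAt ℝ ξ p := hξ.differentiable (by simp) p
  have h4 : DifferentiableAt ℝ Z p := hZ.differentiable (by simp) p
  have hXd : DifferentiableAt ℝ X p := hX.differentiable (by simp) p
  have hYd : DifferentiableAt ℝ Y p := hY.differentiable (by simp) p
  -- key derivative formula
  have key : ∀ (W : V3 → V3), ContDiff ℝ (⊤ : ℕ∞) W → ∀ v : V3,
      fderiv ℝ (fun q => lam q • W q + ξ q (W q) • Z q) p v
        = fderiv ℝ lam p v • W p + lam p • fderiv ℝ W p v
          + (ξ p (fderiv ℝ W p v) + (fderiv ℝ ξ p v) (W p)) • Z p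
          + ξ p (W p) • fderiv ℝ Z p v := by
    intro W hW v
    have h2 : DifferentiableAt ℝ W p := hW.differentiable (by simp) p
    have h5 : DifferentiableAt ℝ (fun q => ξ q (W q)) p := h3.clm_apply h2
    rw [fderiv_fun_add (f := fun q => lam q • W q) (g := fun q => ξ q (W q) • Z q) (h1.smul h2) (h5.smul h4), fderiv_fun_smul h1 h2, fderiv_fun_smul h5 h4,
      fderiv_clm_apply h3 h2]
    simp [ContinuousLinearMap.smulRight_apply, ContinuousLinearMap.add_apply,
      ContinuousLinearMap.comp_apply, ContinuousLinearMap.flip_apply,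
      ContinuousLinearMap.smul_apply]
    module
  -- derivative of ξ applied to a constant
  have hconst : ∀ (c : V3) (v : V3), fderiv ℝ (fun q => ξ q c) p v = fderiv ℝ ξ p v c := by
    intro c v
    rw [fderiv_clm_apply h3 (differentiableAt_const c)]
    simp
  -- H1 : compatibility, expanded
  have H1 : ∀ v : V3, ξ p (fderiv ℝ Z p v) + fderiv ℝ ξ p v (Z p)
      = div3 Z p * ξ p v - fderiv ℝ lam p v := by
    intro v
    have h5 : DifferentiableAt ℝ (fun q => ξ q (Z q)) p := h3.clm_apply h4
    have := hcomp p v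
    rw [fderiv_fun_add h1 h5, fderiv_clm_apply h3 h4] at this
    simp only [ContinuousLinearMap.add_apply, ContinuousLinearMap.comp_apply,
      ContinuousLinearMap.flip_apply] at this
    linarith
  -- H2 : wedge condition at constant vector fields
  have H2 := hwedge (fun _ => Z p) (fun _ => X p) (fun _ => Y p)
    contDiff_const contDiff_const contDiff_const p
  simp only [xiWedgeDxi, dOneL, lieB, hconst, fderiv_fun_const, Pi.zero_apply,
    ContinuousLinearMap.zero_apply, sub_zero, zero_sub, map_zero, map_neg, neg_zero,
    add_zero, map_sub] at H2
  -- main computation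
  simp only [nijT, lieB, hN, key X hX, key Y hY, map_add, _root_.map_smul, map_sub, smul_add,
    smul_sub, smul_smul, ContinuousLinearMap.map_add, ContinuousLinearMap.map_smul,
    ContinuousLinearMap.map_sub, Pi.add_apply, Pi.smul_apply, smul_eq_mul,
    ContinuousLinearMap.add_apply, ContinuousLinearMap.smul_apply]
  match_scalars
  any_goals ring
  linear_combination (ξ p (X p)) * H1 (Y p) - (ξ p (Y p)) * H1 (X p) - H2
end
end

section
/- Let ξ be a 1-form, Z a vector field and λ a smooth function on ℝ³ such that (ξ∧dξ)(W,X,Y) = 0 for all vector fields W, X, Y and d(λ + ⟨ξ,Z⟩) = div(Z)·ξ, and set N = λI + Z⊗ξ. Then for every integer k ≥ 1 the Nijenhuis torsion of the k-th power of N is T_{N^k}(X,Y) = f_k·Z(λ^k)·(⟨ξ,X⟩Y − ⟨ξ,Y⟩X), where f_k = Σ_{l=0}^{k−1} C(k,l)·λ^l·⟨ξ,Z⟩^{k−l−1} (C(k,l) the binomial coefficient) and Z(λ^k) = k·λ^{k−1}·Z(λ). -/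
noncomputable section

open Matrix

/-! ### Auxiliary scalar algebra -/

/-- auxiliary sum `G k x y = ∑_{j<k} x^j (x+y)^{k-1-j}`. -/
def auxG (k : ℕ) (x y : ℝ) : ℝ := ∑ j ∈ Finset.range k, x ^ j * (x + y) ^ (k - 1 - j)

lemma auxG_succ (k : ℕ) (x y : ℝ) :
    auxG (k + 1) x y = (x + y) * auxG k x y + x ^ k := by
  unfold auxG
  rw [Finset.sum_range_succ]
  simp only [Nat.add_sub_cancel, Nat.sub_self, pow_zero, mul_one]
  congr 1
  rw [Finset.mul_sum]
  refine Finset.sum_congr rfl fun j hj => ?_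
  have hj' : j < k := Finset.mem_range.mp hj
  have : k - j = (k - 1 - j) + 1 := by omega
  rw [this, pow_succ]
  ring

lemma auxG_succ' (k : ℕ) (x y : ℝ) :
    auxG (k + 1) x y = x * auxG k x y + (x + y) ^ k := by
  unfold auxG
  rw [Finset.sum_range_succ']
  simp only [pow_zero, one_mul, Nat.add_sub_cancel, Nat.sub_zero]
  rw [Finset.mul_sum]
  congr 1
  refine Finset.sum_congr rfl fun j hj => ?_
  have hj' : j < k := Finset.mem_range.mp hj
  have : k - (j + 1) = k - 1 - j := by omega
  rw [this, pow_succ]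
  ring

lemma auxG_mul (k : ℕ) (x y : ℝ) : x ^ k + auxG k x y * y = (x + y) ^ k := by
  induction k with
  | zero => simp [auxG]
  | succ k ih => rw [auxG_succ]; linear_combination (x + y) * ih

lemma auxF_eq_auxG (k : ℕ) (x y : ℝ) :
    (∑ l ∈ Finset.range k, (k.choose l : ℝ) * x ^ l * y ^ (k - l - 1)) = auxG k x y := by
  induction k with
  | zero => simp [auxG]
  | succ k ih =>
    rw [auxG_succ', ← ih, Finset.sum_range_succ']
    have hadd : (x + y) ^ k = ∑ l ∈ Finset.range (k + 1), x ^ l * y ^ (k - l) * (k.choose l : ℝ) :=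
      add_pow x y k
    rw [hadd, Finset.sum_range_succ']
    simp only [Nat.choose_zero_right, Nat.cast_one, pow_zero, one_mul, mul_one,
      Nat.choose_succ_succ, Nat.cast_add, Nat.sub_zero]
    rw [Finset.mul_sum]
    have : ∀ j ∈ Finset.range k,
        ((k.choose j : ℝ) + (k.choose (j+1) : ℝ)) * x ^ (j+1) * y ^ (k + 1 - (j+1) - 1)
          = x * ((k.choose j : ℝ) * x ^ j * y ^ (k - j - 1))
            + x ^ (j+1) * y ^ (k - (j+1)) * (k.choose (j+1) : ℝ) := by
      intro j hj
      have hj' : j < k := Finset.mem_range.mp hj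
      have h1 : k + 1 - (j + 1) - 1 = k - j - 1 := by omega
      have h2 : k - (j + 1) = k - j - 1 := by omega
      rw [h1, h2, pow_succ]
      ring
    rw [Finset.sum_congr rfl this, Finset.sum_add_distrib]
    simp only [Nat.add_sub_cancel]
    ring

/-! ### Auxiliary calculus lemmas -/

lemma iterate_formula (l : ℝ) (xi : V3 →L[ℝ] ℝ) (Zq : V3) (Nq : V3 → V3)
    (h : ∀ v, Nq v = l • v + xi v • Zq) (k : ℕ) (v : V3) :
    Nq^[k] v = l ^ k • v + (auxG k l (xi Zq) * xi v) • Zq := by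
  induction k with
  | zero => simp [auxG]
  | succ k ih =>
    rw [Function.iterate_succ_apply', ih, h, auxG_succ]
    simp only [map_add, _root_.map_smul, smul_eq_mul]
    module

lemma fderiv_smul_apply' {c : V3 → ℝ} {f : V3 → V3} {p v : V3}
    (hc : DifferentiableAt ℝ c p) (hf : DifferentiableAt ℝ f p) :
    fderiv ℝ (fun q => c q • f q) p v = c p • fderiv ℝ f p v + fderiv ℝ c p v • f p := by
  rw [fderiv_fun_smul hc hf]
  simp [ContinuousLinearMap.smulRight_apply]

lemma fderiv_clm_apply'' {ξ : V3 → V3 →L[ℝ] ℝ} {W : V3 → V3} {p v : V3}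
    (hξ : DifferentiableAt ℝ ξ p) (hW : DifferentiableAt ℝ W p) :
    fderiv ℝ (fun q => ξ q (W q)) p v = ξ p (fderiv ℝ W p v) + (fderiv ℝ ξ p v) (W p) := by
  rw [fderiv_clm_apply hξ hW]
  simp

lemma fderiv_powV3 {f : V3 → ℝ} {p v : V3} (hf : DifferentiableAt ℝ f p) (n : ℕ) :
    fderiv ℝ (fun q => f q ^ (n + 1)) p v = ((n + 1 : ℝ) * f p ^ n) * fderiv ℝ f p v := by
  induction n with
  | zero => simp
  | succ n ih =>
    have : (fun q => f q ^ (n + 2)) = fun q => f q ^ (n + 1) * f q := by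
      funext q; ring
    rw [this, fderiv_fun_mul ((hf.pow (n+1)).congr_of_eventuallyEq ?_) hf]
    · simp only [ContinuousLinearMap.add_apply, ContinuousLinearMap.smul_apply, smul_eq_mul, ih]
      push_cast
      ring
    · exact Filter.Eventually.of_forall fun q => rfl

lemma fderiv_MX {a b : V3 → ℝ} {ξ : V3 → V3 →L[ℝ] ℝ} {X Z : V3 → V3} {p v : V3}
    (ha : DifferentiableAt ℝ a p) (hb : DifferentiableAt ℝ b p)
    (hξ : DifferentiableAt ℝ ξ p) (hX : DifferentiableAt ℝ X p)
    (hZ : DifferentiableAt ℝ Z p) :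
    fderiv ℝ (fun q => a q • X q + (b q * ξ q (X q)) • Z q) p v
      = fderiv ℝ a p v • X p + a p • fderiv ℝ X p v
        + (fderiv ℝ b p v * ξ p (X p)
            + b p * (ξ p (fderiv ℝ X p v) + (fderiv ℝ ξ p v) (X p))) • Z p
        + (b p * ξ p (X p)) • fderiv ℝ Z p v := by
  have hξX : DifferentiableAt ℝ (fun q => ξ q (X q)) p := hξ.clm_apply hX
  have h1 : DifferentiableAt ℝ (fun q => a q • X q) p := ha.smul hX
  have h2 : DifferentiableAt ℝ (fun q => (b q * ξ q (X q)) • Z q) p := (hb.mul hξX).smul hZ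
  rw [show (fun q => a q • X q + (b q * ξ q (X q)) • Z q)
        = (fun q => a q • X q) + (fun q => (b q * ξ q (X q)) • Z q) from rfl,
      fderiv_add h1 h2, ContinuousLinearMap.add_apply,
      fderiv_smul_apply' ha hX, fderiv_smul_apply' (hb.fun_mul hξX) hZ,
      fderiv_fun_mul hb hξX]
  simp only [ContinuousLinearMap.add_apply, ContinuousLinearMap.smul_apply, smul_eq_mul]
  rw [fderiv_clm_apply'' hξ hX]
  module

/-- Under the hypotheses of a three-dimensional oriented PqN manifold,
the Nijenhuis torsion of the `k`-th power of `N = λI + Z⊗ξ` is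
`T_{N^k}(X,Y) = f_k·Z(λ^k)·(⟨ξ,X⟩Y − ⟨ξ,Y⟩X)`, where
`f_k = Σ_{l=0}^{k−1} C(k,l)·λ^l·⟨ξ,Z⟩^{k−l−1}` and `Z(λ^k) = k·λ^{k−1}·Z(λ)`. -/
theorem stmt10
    (ξ : V3 → V3 →L[ℝ] ℝ) (hξ : ContDiff ℝ (⊤ : ℕ∞) ξ)
    (Z : V3 → V3) (hZ : ContDiff ℝ (⊤ : ℕ∞) Z)
    (lam : V3 → ℝ) (hlam : ContDiff ℝ (⊤ : ℕ∞) lam)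
    (hwedge : ∀ W X Y : V3 → V3, ContDiff ℝ (⊤ : ℕ∞) W → ContDiff ℝ (⊤ : ℕ∞) X → ContDiff ℝ (⊤ : ℕ∞) Y →
      ∀ p, xiWedgeDxi ξ W X Y p = 0)
    (hcomp : ∀ p v, fderiv ℝ (fun q => lam q + ξ q (Z q)) p v = div3 Z p * ξ p v)
    (N : V3 → V3 → V3)
    (hN : ∀ p v, N p v = lam p • v + ξ p v • Z p) :
    ∀ k : ℕ, 1 ≤ k → ∀ X Y : V3 → V3, ContDiff ℝ (⊤ : ℕ∞) X → ContDiff ℝ (⊤ : ℕ∞) Y → ∀ p,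
      nijT (fun q v => (N q)^[k] v) X Y p
        = ((∑ l ∈ Finset.range k, (k.choose l : ℝ) * lam p ^ l * ξ p (Z p) ^ (k - l - 1))
            * ((k : ℝ) * lam p ^ (k - 1) * fderiv ℝ lam p (Z p)))
          • (ξ p (X p) • Y p - ξ p (Y p) • X p) := by
  intro k hk X Y hX hY p
  obtain ⟨n, rfl⟩ : ∃ n, k = n + 1 := ⟨k - 1, by omega⟩
  -- differentiability facts
  have hξd : ∀ q, DifferentiableAt ℝ ξ q := fun q => (hξ.differentiable (by simp)).differentiableAt
  have hZd : ∀ q, DifferentiableAt ℝ Z q := fun q => (hZ.differentiable (by simp)).differentiableAt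
  have hXd : ∀ q, DifferentiableAt ℝ X q := fun q => (hX.differentiable (by simp)).differentiableAt
  have hYd : ∀ q, DifferentiableAt ℝ Y q := fun q => (hY.differentiable (by simp)).differentiableAt
  have hlamd : ∀ q, DifferentiableAt ℝ lam q :=
    fun q => (hlam.differentiable (by simp)).differentiableAt
  have hμC : ContDiff ℝ (⊤ : ℕ∞) (fun q => ξ q (Z q)) := hξ.clm_apply hZ
  have hμd : ∀ q, DifferentiableAt ℝ (fun q => ξ q (Z q)) q :=
    fun q => (hμC.differentiable (by simp)).differentiableAt
  have hbC : ContDiff ℝ (⊤ : ℕ∞) (fun q => auxG (n + 1) (lam q) (ξ q (Z q))) := by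
    unfold auxG
    exact ContDiff.sum fun j _ => (hlam.pow j).mul ((hlam.add hμC).pow _)
  have hbd : DifferentiableAt ℝ (fun q => auxG (n + 1) (lam q) (ξ q (Z q))) p :=
    (hbC.differentiable (by simp)).differentiableAt
  have had : DifferentiableAt ℝ (fun q => lam q ^ (n + 1)) p := (hlamd p).pow _
  -- the iterate formula
  have hNk : ∀ q v, (N q)^[n + 1] v
      = lam q ^ (n + 1) • v + (auxG (n + 1) (lam q) (ξ q (Z q)) * ξ q v) • Z q :=
    fun q v => iterate_formula (lam q) (ξ q) (Z q) (N q) (fun v => hN q v) (n + 1) v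
  -- derivative of the multiplied vector fields
  have hDA : ∀ w, fderiv ℝ
        (fun q => lam q ^ (n + 1) • X q
          + (auxG (n + 1) (lam q) (ξ q (Z q)) * ξ q (X q)) • Z q) p w
      = (((n : ℝ) + 1) * lam p ^ n * fderiv ℝ lam p w) • X p
        + lam p ^ (n + 1) • fderiv ℝ X p w
        + (fderiv ℝ (fun q => auxG (n + 1) (lam q) (ξ q (Z q))) p w * ξ p (X p)
            + auxG (n + 1) (lam p) (ξ p (Z p))
              * (ξ p (fderiv ℝ X p w) + (fderiv ℝ ξ p w) (X p))) • Z p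
        + (auxG (n + 1) (lam p) (ξ p (Z p)) * ξ p (X p)) • fderiv ℝ Z p w := by
    intro w
    rw [fderiv_MX had hbd (hξd p) (hXd p) (hZd p), fderiv_powV3 (hlamd p) n]
  have hDB : ∀ w, fderiv ℝ
        (fun q => lam q ^ (n + 1) • Y q
          + (auxG (n + 1) (lam q) (ξ q (Z q)) * ξ q (Y q)) • Z q) p w
      = (((n : ℝ) + 1) * lam p ^ n * fderiv ℝ lam p w) • Y p
        + lam p ^ (n + 1) • fderiv ℝ Y p w
        + (fderiv ℝ (fun q => auxG (n + 1) (lam q) (ξ q (Z q))) p w * ξ p (Y p)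
            + auxG (n + 1) (lam p) (ξ p (Z p))
              * (ξ p (fderiv ℝ Y p w) + (fderiv ℝ ξ p w) (Y p))) • Z p
        + (auxG (n + 1) (lam p) (ξ p (Z p)) * ξ p (Y p)) • fderiv ℝ Z p w := by
    intro w
    rw [fderiv_MX had hbd (hξd p) (hYd p) (hZd p), fderiv_powV3 (hlamd p) n]
  -- derivative of μ = ξ(Z)
  have hdμ : ∀ w, fderiv ℝ (fun q => ξ q (Z q)) p w
      = div3 Z p * ξ p w - fderiv ℝ lam p w := by
    intro w
    have h1 := hcomp p w
    rw [fderiv_fun_add (hlamd p) (hμd p), ContinuousLinearMap.add_apply] at h1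
    linarith
  have hmu : ∀ w, ξ p (fderiv ℝ Z p w)
      = div3 Z p * ξ p w - fderiv ℝ lam p w - (fderiv ℝ ξ p w) (Z p) := by
    intro w
    have := hdμ w
    rw [fderiv_clm_apply'' (hξd p) (hZd p)] at this
    linarith
  -- derivative of a + bμ = (λ+μ)^(n+1)
  have hfeq : (fun q => lam q ^ (n + 1) + auxG (n + 1) (lam q) (ξ q (Z q)) * ξ q (Z q))
      = (fun q => (lam q + ξ q (Z q)) ^ (n + 1)) :=
    funext fun q => auxG_mul (n + 1) (lam q) (ξ q (Z q))
  have hdb : ∀ w, ((n : ℝ) + 1) * lam p ^ n * fderiv ℝ lam p w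
      + (fderiv ℝ (fun q => auxG (n + 1) (lam q) (ξ q (Z q))) p w * ξ p (Z p)
          + auxG (n + 1) (lam p) (ξ p (Z p)) * (div3 Z p * ξ p w - fderiv ℝ lam p w))
      = ((n : ℝ) + 1) * (lam p + ξ p (Z p)) ^ n * (div3 Z p * ξ p w) := by
    intro w
    have h1 : fderiv ℝ (fun q => lam q ^ (n + 1)
        + auxG (n + 1) (lam q) (ξ q (Z q)) * ξ q (Z q)) p w
        = fderiv ℝ (fun q => (lam q + ξ q (Z q)) ^ (n + 1)) p w := by rw [hfeq]
    rw [fderiv_fun_add had (hbd.fun_mul (hμd p)), ContinuousLinearMap.add_apply,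
      fderiv_fun_mul hbd (hμd p), fderiv_powV3 (hlamd p) n,
      fderiv_powV3 ((hlamd p).fun_add (hμd p)) n] at h1
    simp only [ContinuousLinearMap.add_apply, ContinuousLinearMap.smul_apply, smul_eq_mul] at h1
    rw [hcomp p w] at h1
    rw [hdμ w] at h1
    linarith [h1]
  -- the wedge hypothesis at p
  have hdOne : ∀ (U V : V3 → V3), (∀ q, DifferentiableAt ℝ U q) →
      (∀ q, DifferentiableAt ℝ V q) →
      dOneL ξ U V p = (fderiv ℝ ξ p (U p)) (V p) - (fderiv ℝ ξ p (V p)) (U p) := by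
    intro U V hU hV
    unfold dOneL lieB
    rw [fderiv_clm_apply'' (hξd p) (hV p), fderiv_clm_apply'' (hξd p) (hU p), map_sub]
    ring
  have hw : ξ p (Z p) * ((fderiv ℝ ξ p (X p)) (Y p) - (fderiv ℝ ξ p (Y p)) (X p))
      - ξ p (X p) * ((fderiv ℝ ξ p (Z p)) (Y p) - (fderiv ℝ ξ p (Y p)) (Z p))
      + ξ p (Y p) * ((fderiv ℝ ξ p (Z p)) (X p) - (fderiv ℝ ξ p (X p)) (Z p)) = 0 := by
    have h1 := hwedge Z X Y hZ hX hY p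
    unfold xiWedgeDxi at h1
    rw [hdOne X Y hXd hYd, hdOne Z Y hZd hYd, hdOne Z X hZd hXd] at h1
    linarith
  -- main computation
  simp only [nijT, lieB, hNk]
  simp only [hDA, hDB]
  simp only [map_add, _root_.map_smul, _root_.map_sub, ContinuousLinearMap.add_apply,
    ContinuousLinearMap.coe_smul', Pi.smul_apply, ContinuousLinearMap.smul_apply, smul_eq_mul]
  simp only [hmu]
  rw [auxF_eq_auxG]
  simp only [Nat.add_sub_cancel, Nat.cast_add, Nat.cast_one]
  match_scalars
  any_goals ring
  simp only [Nat.add_comm 1 n]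
  linear_combination (auxG (n + 1) (lam p) (ξ p (Z p)) * ξ p (X p)) * hdb (Y p)
    - (auxG (n + 1) (lam p) (ξ p (Z p)) * ξ p (Y p)) * hdb (X p)
    - auxG (n + 1) (lam p) (ξ p (Z p)) ^ 2 * hw
end
end

section
/- On ℝ³ with coordinates (x,y,z), let λ, a, b, c : ℝ³ → ℝ be smooth functions satisfying ∂_x(c+λ) = 0, ∂_y(c+λ) = 0 and ∂_zλ = ∂_x a + ∂_y b. Let P = (0,0,1) (encoding the Poisson bivector π = ∂/∂x ∧ ∂/∂y, with ξ = dz), let Z = (a,b,c), N = λI + Z⊗dz, and f = −Z(λ) = −(a·∂_xλ + b·∂_yλ + c·∂_zλ). Then (π, N, f·dx∧dy∧dz) is a Poisson quasi-Nijenhuis structure on ℝ³: π and N are compatible and T_N(X,Y)(p) = f(p)·P × (X(p) × Y(p)) for all vector fields X, Y and all p. -/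
set_option maxHeartbeats 2000000
noncomputable section

open Matrix

/-! ### Auxiliary machinery -/

lemma decompV3 (w : V3) :
    w = w 0 • (Pi.single 0 1 : V3) + w 1 • (Pi.single 1 1 : V3) + w 2 • (Pi.single 2 1 : V3) := by
  funext i; fin_cases i <;> simp

lemma clm_eval (L : V3 →L[ℝ] ℝ) (v : V3) :
    L v = ∑ i, v i * L (Pi.single i 1) := by
  rw [Fin.sum_univ_three]
  nth_rewrite 1 [decompV3 v]
  simp

lemma fd_eval (g : V3 → ℝ) (p w : V3) :
    fderiv ℝ g p w = ∑ i, w i * pd i g p := clm_eval _ _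

lemma fdv_comp (F : V3 → V3) (p : V3) (hF : DifferentiableAt ℝ F p) (w : V3)
    (k : Fin 3) : fderiv ℝ F p w k = fderiv ℝ (fun q => F q k) p w := by
  have h : fderiv ℝ F p = ContinuousLinearMap.pi fun i => fderiv ℝ (fun q => F q i) p :=
    fderiv_pi (𝕜 := ℝ) (φ := fun k q => F q k) (x := p) fun i => differentiableAt_pi.mp hF i
  rw [h]; simp

section pdlem
variable {f g : V3 → ℝ} {p : V3} {i : Fin 3}

lemma pd_add (hf : DifferentiableAt ℝ f p) (hg : DifferentiableAt ℝ g p) :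
    pd i (fun q => f q + g q) p = pd i f p + pd i g p := by
  unfold pd; rw [fderiv_fun_add hf hg]; rfl

lemma pd_mul (hf : DifferentiableAt ℝ f p) (hg : DifferentiableAt ℝ g p) :
    pd i (fun q => f q * g q) p = f p * pd i g p + g p * pd i f p := by
  unfold pd; rw [fderiv_fun_mul hf hg]; simp [mul_comm]

lemma pd_neg : pd i (fun q => -f q) p = -pd i f p := by
  unfold pd; rw [fderiv_fun_neg]; rfl

lemma pd_sub (hf : DifferentiableAt ℝ f p) (hg : DifferentiableAt ℝ g p) :
    pd i (fun q => f q - g q) p = pd i f p - pd i g p := by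
  unfold pd; rw [fderiv_fun_sub hf hg]; rfl

lemma pd_const (r : ℝ) : pd i (fun _ => r) p = 0 := by
  unfold pd; simp

end pdlem

lemma lieB_eval (X Y : V3 → V3) (p : V3) (dX : DifferentiableAt ℝ X p)
    (dY : DifferentiableAt ℝ Y p) (k : Fin 3) :
    lieB X Y p k
      = ∑ i, (X p i * pd i (fun q => Y q k) p - Y p i * pd i (fun q => X q k) p) := by
  simp only [lieB, Pi.sub_apply]
  rw [fdv_comp Y p dY, fdv_comp X p dX, fd_eval, fd_eval, ← Finset.sum_sub_distrib]

lemma formBr_eval (Q : V3 → (V3 →L[ℝ] ℝ) → V3) (α β : V3 → V3 →L[ℝ] ℝ)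
    (Y : V3 → V3) (A B WA WB : Fin 3 → V3 → ℝ) (p : V3)
    (hA : ∀ q v, α q v = ∑ i, v i * A i q)
    (hB : ∀ q v, β q v = ∑ i, v i * B i q)
    (hWA : ∀ q i, Q q (α q) i = WA i q)
    (hWB : ∀ q i, Q q (β q) i = WB i q)
    (dWA : ∀ i, DifferentiableAt ℝ (WA i) p)
    (dWB : ∀ i, DifferentiableAt ℝ (WB i) p)
    (dY : DifferentiableAt ℝ Y p) :
    formBr Q α β Y p =
      ((∑ i, WA i p * pd i (fun q => ∑ j, Y q j * B j q) p)
        - ∑ k, (∑ i, (WA i p * pd i (fun q => Y q k) p - Y p i * pd i (WA k) p)) * B k p)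
      - ((∑ i, WB i p * pd i (fun q => ∑ j, Y q j * A j q) p)
        - ∑ k, (∑ i, (WB i p * pd i (fun q => Y q k) p - Y p i * pd i (WB k) p)) * A k p)
      - ∑ i, Y p i * pd i (fun q => ∑ j, WA j q * B j q) p := by
  have hW : (fun q => Q q (α q)) = fun q k => WA k q :=
    funext fun q => funext fun k => hWA q k
  have hV : (fun q => Q q (β q)) = fun q k => WB k q :=
    funext fun q => funext fun k => hWB q k
  have dW : DifferentiableAt ℝ (fun q => Q q (α q)) p := by
    rw [hW]; exact differentiableAt_pi.mpr dWA
  have dV : DifferentiableAt ℝ (fun q => Q q (β q)) p := by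
    rw [hV]; exact differentiableAt_pi.mpr dWB
  simp only [formBr, lieDeriv]
  rw [show (fun q => β q (Y q)) = fun q => ∑ j, Y q j * B j q from
      funext fun q => hB q (Y q)]
  rw [show (fun q => α q (Y q)) = fun q => ∑ j, Y q j * A j q from
      funext fun q => hA q (Y q)]
  rw [show (fun q => β q (Q q (α q))) = fun q => ∑ j, WA j q * B j q from
      funext fun q => by
        rw [hB]; exact Finset.sum_congr rfl fun i _ => by rw [hWA]]
  rw [hB p (lieB (fun q => Q q (α q)) Y p), hA p (lieB (fun q => Q q (β q)) Y p)]
  simp only [fd_eval, lieB_eval (fun q => Q q (α q)) Y p dW dY,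
    lieB_eval (fun q => Q q (β q)) Y p dV dY, hWA, hWB]

/-- The family of PqN structures on ℝ³ of Example 3.1: for smooth
`λ, a, b, c` with `∂_x(c+λ) = 0`, `∂_y(c+λ) = 0`, `∂_zλ = ∂_x a + ∂_y b`, setting
`P = (0,0,1)` (i.e. `π = ∂x∧∂y`, `ξ = dz`), `Z = (a,b,c)`, `N = λI + Z⊗dz` and
`f = −Z(λ)`, the triple `(π, N, f·dx∧dy∧dz)` is a PqN structure. -/
theorem stmt18
    (lam a b c : V3 → ℝ)
    (hlam : ContDiff ℝ (⊤ : ℕ∞) lam) (ha : ContDiff ℝ (⊤ : ℕ∞) a)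
    (hb : ContDiff ℝ (⊤ : ℕ∞) b) (hc : ContDiff ℝ (⊤ : ℕ∞) c)
    (h1 : ∀ p, pd 0 (fun q => c q + lam q) p = 0)
    (h2 : ∀ p, pd 1 (fun q => c q + lam q) p = 0)
    (h3 : ∀ p, pd 2 lam p = pd 0 a p + pd 1 b p)
    (Z : V3 → V3) (hZ : ∀ p, Z p = ![a p, b p, c p])
    (N : V3 → V3 →L[ℝ] V3)
    (hN : ∀ p v, N p v = lam p • v + v 2 • Z p)
    (f : V3 → ℝ)
    (hf : ∀ p, f p = -(a p * pd 0 lam p + b p * pd 1 lam p + c p * pd 2 lam p)) :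
    Compatible (fun _ => ![0, 0, 1]) N ∧
    (∀ X Y : V3 → V3, ContDiff ℝ (⊤ : ℕ∞) X → ContDiff ℝ (⊤ : ℕ∞) Y → ∀ p,
      nijT (fun q v => N q v) X Y p
        = f p • crossProduct ![0, 0, 1] (crossProduct (X p) (Y p))) := by
  have dlam : Differentiable ℝ lam := hlam.differentiable (by simp)
  have da : Differentiable ℝ a := ha.differentiable (by simp)
  have db : Differentiable ℝ b := hb.differentiable (by simp)
  have dc : Differentiable ℝ c := hc.differentiable (by simp)
  have hZ0 : ∀ q, Z q 0 = a q := fun q => by rw [hZ]; rfl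
  have hZ1 : ∀ q, Z q 1 = b q := fun q => by rw [hZ]; rfl
  have hZ2 : ∀ q, Z q 2 = c q := fun q => by rw [hZ]; rfl
  have dZ : Differentiable ℝ Z := by
    rw [funext hZ]
    apply differentiable_pi.mpr
    intro i
    fin_cases i <;>
      simp only [Matrix.cons_val_zero, Matrix.cons_val_one, Matrix.head_cons,
        Matrix.cons_val_two, Matrix.tail_cons] <;> assumption
  have hc0 : ∀ p, pd 0 c p = -pd 0 lam p := by
    intro p
    have h := pd_add (i := 0) (dc p) (dlam p)
    rw [h1 p] at h; linarith
  have hc1 : ∀ p, pd 1 c p = -pd 1 lam p := by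
    intro p
    have h := pd_add (i := 1) (dc p) (dlam p)
    rw [h2 p] at h; linarith
  refine ⟨⟨?_, ?_⟩, ?_⟩
  · -- pointwise compatibility N ∘ π♯ = π♯ ∘ N*
    intro p α
    funext k
    fin_cases k <;>
      simp [piSharp, cross_apply, ContinuousLinearMap.comp_apply, hN, map_add, _root_.map_smul,
        smul_eq_mul, Pi.single_apply, Pi.add_apply, Pi.smul_apply] <;> ring
  · -- Magri–Morosi concomitant vanishes
    intro α β hα hβ Y hY p
    have dY : Differentiable ℝ Y := hY.differentiable (by simp)
    have dNY : Differentiable ℝ (fun q => N q (Y q)) := by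
      have e : (fun q => N q (Y q)) = fun q => lam q • Y q + Y q 2 • Z q :=
        funext fun q => hN q (Y q)
      rw [e]; fun_prop
    obtain ⟨A, dA, hAe, hA⟩ : ∃ A : Fin 3 → V3 → ℝ, (∀ i, Differentiable ℝ (A i)) ∧
        (∀ q j, α q (Pi.single j 1) = A j q) ∧ (∀ q v, α q v = ∑ i, v i * A i q) :=
      ⟨fun i q => α q (Pi.single i 1),
       fun i => (hα.differentiable (by simp)).clm_apply (differentiable_const _),
       fun _ _ => rfl, fun q v => clm_eval (α q) v⟩
    obtain ⟨B, dB, hBe, hB⟩ : ∃ B : Fin 3 → V3 → ℝ, (∀ i, Differentiable ℝ (B i)) ∧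
        (∀ q j, β q (Pi.single j 1) = B j q) ∧ (∀ q v, β q v = ∑ i, v i * B i q) :=
      ⟨fun i q => β q (Pi.single i 1),
       fun i => (hβ.differentiable (by simp)).clm_apply (differentiable_const _),
       fun _ _ => rfl, fun q v => clm_eval (β q) v⟩
    have dA0 := dA 0; have dA1 := dA 1; have dA2 := dA 2
    have dB0 := dB 0; have dB1 := dB 1; have dB2 := dB 2
    set PA : Fin 3 → V3 → ℝ := ![fun q => -A 1 q, fun q => A 0 q, fun _ => 0] with hPAdef
    set PB : Fin 3 → V3 → ℝ := ![fun q => -B 1 q, fun q => B 0 q, fun _ => 0] with hPBdef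
    set LA : Fin 3 → V3 → ℝ :=
      ![fun q => -(lam q * A 1 q), fun q => lam q * A 0 q, fun _ => 0] with hLAdef
    set LB : Fin 3 → V3 → ℝ :=
      ![fun q => -(lam q * B 1 q), fun q => lam q * B 0 q, fun _ => 0] with hLBdef
    set A' : Fin 3 → V3 → ℝ :=
      ![fun q => lam q * A 0 q, fun q => lam q * A 1 q,
        fun q => lam q * A 2 q + (a q * A 0 q + b q * A 1 q + c q * A 2 q)] with hA'def
    set B' : Fin 3 → V3 → ℝ :=
      ![fun q => lam q * B 0 q, fun q => lam q * B 1 q,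
        fun q => lam q * B 2 q + (a q * B 0 q + b q * B 1 q + c q * B 2 q)] with hB'def
    have hPAc : ∀ q i, piSharp (fun _ => ![0, 0, 1]) q (α q) i = PA i q := by
      intro q i; rw [hPAdef]; fin_cases i <;>
        simp [piSharp, cross_apply, hAe]
    have hPBc : ∀ q i, piSharp (fun _ => ![0, 0, 1]) q (β q) i = PB i q := by
      intro q i; rw [hPBdef]; fin_cases i <;>
        simp [piSharp, cross_apply, hBe]
    have hLAc : ∀ q i, N q (piSharp (fun _ => ![0, 0, 1]) q (α q)) i = LA i q := by
      intro q i; rw [hLAdef]; simp only [hN]; fin_cases i <;>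
        simp [piSharp, cross_apply, hAe, Pi.add_apply, Pi.smul_apply, smul_eq_mul] <;> ring
    have hLBc : ∀ q i, N q (piSharp (fun _ => ![0, 0, 1]) q (β q)) i = LB i q := by
      intro q i; rw [hLBdef]; simp only [hN]; fin_cases i <;>
        simp [piSharp, cross_apply, hBe, Pi.add_apply, Pi.smul_apply, smul_eq_mul] <;> ring
    have hA'c : ∀ q v, ((α q).comp (N q)) v = ∑ i, v i * A' i q := by
      intro q v
      rw [hA'def]
      simp only [ContinuousLinearMap.comp_apply, hN, map_add, _root_.map_smul, smul_eq_mul, hA]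
      simp only [Fin.sum_univ_three, Pi.add_apply, Pi.smul_apply, smul_eq_mul, hZ0, hZ1, hZ2, Matrix.cons_val_zero, Matrix.cons_val_one,
        Matrix.head_cons, Matrix.cons_val_two, Matrix.tail_cons]
      ring
    have hB'c : ∀ q v, ((β q).comp (N q)) v = ∑ i, v i * B' i q := by
      intro q v
      rw [hB'def]
      simp only [ContinuousLinearMap.comp_apply, hN, map_add, _root_.map_smul, smul_eq_mul, hB]
      simp only [Fin.sum_univ_three, Pi.add_apply, Pi.smul_apply, smul_eq_mul, hZ0, hZ1, hZ2, Matrix.cons_val_zero, Matrix.cons_val_one,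
        Matrix.head_cons, Matrix.cons_val_two, Matrix.tail_cons]
      ring
    have hLAc' : ∀ q i, piSharp (fun _ => ![0, 0, 1]) q ((α q).comp (N q)) i = LA i q := by
      intro q i; rw [hLAdef]; fin_cases i <;>
        simp [piSharp, cross_apply, hA'c, Fin.sum_univ_three, hA'def, Pi.single_apply] <;> ring
    have hLBc' : ∀ q i, piSharp (fun _ => ![0, 0, 1]) q ((β q).comp (N q)) i = LB i q := by
      intro q i; rw [hLBdef]; fin_cases i <;>
        simp [piSharp, cross_apply, hB'c, Fin.sum_univ_three, hB'def, Pi.single_apply] <;> ring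
    have dPA : ∀ i, DifferentiableAt ℝ (PA i) p := by
      intro i; rw [hPAdef]; fin_cases i <;> simp <;> fun_prop
    have dPB : ∀ i, DifferentiableAt ℝ (PB i) p := by
      intro i; rw [hPBdef]; fin_cases i <;> simp <;> fun_prop
    have dLA : ∀ i, DifferentiableAt ℝ (LA i) p := by
      intro i; rw [hLAdef]; fin_cases i <;> simp <;> fun_prop
    have dLB : ∀ i, DifferentiableAt ℝ (LB i) p := by
      intro i; rw [hLBdef]; fin_cases i <;> simp <;> fun_prop
    simp only [magriMorosi]
    rw [formBr_eval (fun q γ => N q (piSharp (fun _ => ![0, 0, 1]) q γ)) α β Y A B LA LB p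
        hA hB hLAc hLBc dLA dLB (dY p),
      formBr_eval (piSharp (fun _ => ![0, 0, 1])) (fun q => (α q).comp (N q)) β Y A' B LA PB p
        hA'c hB hLAc' hPBc dLA dPB (dY p),
      formBr_eval (piSharp (fun _ => ![0, 0, 1])) α (fun q => (β q).comp (N q)) Y A B' PA LB p
        hA hB'c hPAc hLBc' dPA dLB (dY p),
      formBr_eval (piSharp (fun _ => ![0, 0, 1])) α β (fun q => N q (Y q)) A B PA PB p
        hA hB hPAc hPBc dPA dPB (dNY p)]
    simp only [Fin.sum_univ_three, hPAdef, hPBdef, hLAdef, hLBdef, hA'def, hB'def,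
      Matrix.cons_val_zero, Matrix.cons_val_one, Matrix.head_cons, Matrix.cons_val_two,
      Matrix.tail_cons, hN, Pi.add_apply, Pi.smul_apply, smul_eq_mul, hZ0, hZ1, hZ2]
    simp (disch := fun_prop) only [pd_add, pd_mul, pd_neg, pd_sub, pd_const]
    simp only [hc0, hc1, h3]
    ring
  · -- Nijenhuis torsion
    intro X Y hX hY p
    have dX : Differentiable ℝ X := hX.differentiable (by simp)
    have dY : Differentiable ℝ Y := hY.differentiable (by simp)
    have dFX : DifferentiableAt ℝ (fun q => lam q • X q + X q 2 • Z q) p := by fun_prop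
    have dFY : DifferentiableAt ℝ (fun q => lam q • Y q + Y q 2 • Z q) p := by fun_prop
    funext k
    fin_cases k <;>
    · simp only [nijT, hN, Pi.add_apply, Pi.sub_apply, Pi.smul_apply, smul_eq_mul]
      simp only [lieB_eval (fun q => lam q • X q + X q 2 • Z q)
          (fun q => lam q • Y q + Y q 2 • Z q) p dFX dFY,
        lieB_eval (fun q => lam q • X q + X q 2 • Z q) Y p dFX (dY p),
        lieB_eval X (fun q => lam q • Y q + Y q 2 • Z q) p (dX p) dFY,
        lieB_eval X Y p (dX p) (dY p)]
      simp only [Fin.zero_eta, Fin.mk_one, Fin.reduceFinMk, Fin.isValue,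
        Fin.sum_univ_three, Pi.add_apply, Pi.smul_apply, smul_eq_mul,
        hZ0, hZ1, hZ2, hf, cross_apply, Matrix.cons_val_zero, Matrix.cons_val_one,
        Matrix.head_cons, Matrix.cons_val_two, Matrix.tail_cons]
      simp (disch := fun_prop) only [pd_add, pd_mul, pd_neg, pd_sub, pd_const]
      simp only [hc0, hc1, h3]
      ring
end
end

section
/- On ℝ³ with coordinates (x,y,z), let N be the (1,1) tensor field N(x,y,z)(v₁,v₂,v₃) = (−(y/2)·v₃, 2v₁ − z·v₃, 2v₂) (i.e., N = −(y/2)∂x⊗dz + 2∂y⊗dx − z∂y⊗dz + 2∂z⊗dy). Then: (a) its Nijenhuis torsion is T_N(X,Y)(p) = (X₃(p)Y₁(p) − X₁(p)Y₃(p), X₃(p)Y₂(p) − X₂(p)Y₃(p), 0) for all vector fields X, Y; (b) its Haantjes torsion vanishes, H_N = 0; (c) ⟨dz, T_N(X,Y)⟩ = 0 for all vector fields X, Y; (d) the 1-form i_N(dz) : p ↦ dz∘N(p) equals 2dy, hence d(i_N(dz)) = 0. Consequently (N, dz) is a Haantjes structure on ℝ³. -/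
noncomputable section

open Matrix

/-! ### Auxiliary derivative lemmas -/

lemma dcoord (i : Fin 3) (p v : V3) : fderiv ℝ (fun q : V3 => q i) p v = v i := by
  have : (fun q : V3 => q i) = ⇑(ContinuousLinearMap.proj (R := ℝ) (φ := fun _ : Fin 3 => ℝ) i) := rfl
  rw [this, (ContinuousLinearMap.proj (R := ℝ) (φ := fun _ : Fin 3 => ℝ) i).fderiv]; rfl

lemma diffcoord (i : Fin 3) : Differentiable ℝ (fun q : V3 => q i) :=
  (ContinuousLinearMap.proj (R := ℝ) (φ := fun _ : Fin 3 => ℝ) i).differentiable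

lemma diffcomp {X : V3 → V3} (hX : Differentiable ℝ X) (i : Fin 3) :
    Differentiable ℝ (fun q => X q i) :=
  ((ContinuousLinearMap.proj (R := ℝ) (φ := fun _ : Fin 3 => ℝ) i).differentiable).comp hX

lemma dmul {f g : V3 → ℝ} (hf : Differentiable ℝ f) (hg : Differentiable ℝ g) (p v : V3) :
    fderiv ℝ (fun q => f q * g q) p v
      = fderiv ℝ f p v * g p + f p * fderiv ℝ g p v := by
  rw [fderiv_fun_mul (hf p) (hg p)]; simp; ring

lemma dconstmul {g : V3 → ℝ} (c : ℝ) (hg : Differentiable ℝ g) (p v : V3) :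
    fderiv ℝ (fun q => c * g q) p v = c * fderiv ℝ g p v := by
  rw [fderiv_const_mul (hg p) c]; simp

lemma dsub {f g : V3 → ℝ} (hf : Differentiable ℝ f) (hg : Differentiable ℝ g) (p v : V3) :
    fderiv ℝ (fun q => f q - g q) p v = fderiv ℝ f p v - fderiv ℝ g p v := by
  rw [fderiv_fun_sub (hf p) (hg p)]; rfl

lemma lieB_apply {X Y : V3 → V3} (hX : ∀ i, Differentiable ℝ (fun q => X q i))
    (hY : ∀ i, Differentiable ℝ (fun q => Y q i)) (p : V3) (i : Fin 3) :
    lieB X Y p i = fderiv ℝ (fun q => Y q i) p (X p) - fderiv ℝ (fun q => X q i) p (Y p) := by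
  unfold lieB
  rw [Pi.sub_apply, fderiv_pi (fun j => (hY j) p), fderiv_pi (fun j => (hX j) p)]; rfl

lemma dC0 {X : V3 → V3} (hX : Differentiable ℝ X) (p v : V3) :
    fderiv ℝ (fun q => -(q 1 / 2) * X q 2) p v
      = -(v 1 / 2) * X p 2 + -(p 1 / 2) * fderiv ℝ (fun q => X q 2) p v := by
  have h : (fun q : V3 => -(q 1 / 2) * X q 2)
      = fun q => (-(1/2) : ℝ) * (q 1 * X q 2) := by funext q; ring
  rw [h, dconstmul _ (g := fun q => q 1 * X q 2) ((diffcoord 1).mul (diffcomp hX 2)),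
      dmul (diffcoord 1) (diffcomp hX 2), dcoord]
  ring

lemma dC1 {X : V3 → V3} (hX : Differentiable ℝ X) (p v : V3) :
    fderiv ℝ (fun q => 2 * X q 0 - q 2 * X q 2) p v
      = 2 * fderiv ℝ (fun q => X q 0) p v
        - (v 2 * X p 2 + p 2 * fderiv ℝ (fun q => X q 2) p v) := by
  rw [dsub (f := fun q => 2 * X q 0) (g := fun q => q 2 * X q 2) ((differentiable_const 2).mul (diffcomp hX 0)) ((diffcoord 2).mul (diffcomp hX 2)),
      dconstmul _ (diffcomp hX 0), dmul (diffcoord 2) (diffcomp hX 2), dcoord]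

lemma dC2 {X : V3 → V3} (hX : Differentiable ℝ X) (p v : V3) :
    fderiv ℝ (fun q => 2 * X q 1) p v = 2 * fderiv ℝ (fun q => X q 1) p v :=
  dconstmul _ (diffcomp hX 1) p v

lemma diffM {X : V3 → V3} (hX : Differentiable ℝ X) :
    ∀ i, Differentiable ℝ
      (fun q => (![-(q 1 / 2) * X q 2, 2 * X q 0 - q 2 * X q 2, 2 * X q 1] : V3) i) := by
  intro i
  fin_cases i <;> simp <;> fun_prop

lemma diffMfull {X : V3 → V3} (hX : Differentiable ℝ X) :
    Differentiable ℝ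
      (fun q => (![-(q 1 / 2) * X q 2, 2 * X q 0 - q 2 * X q 2, 2 * X q 1] : V3)) :=
  differentiable_pi.mpr (diffM hX)

lemma vec_ext {a b : V3} (h0 : a 0 = b 0) (h1 : a 1 = b 1) (h2 : a 2 = b 2) : a = b := by
  funext i; fin_cases i <;> assumption

/-- Key computation: explicit Nijenhuis torsion. -/
lemma nij_key (N : V3 → V3 → V3)
    (hN : ∀ p v, N p v = ![-(p 1 / 2) * v 2, 2 * v 0 - p 2 * v 2, 2 * v 1])
    (X Y : V3 → V3) (hX : Differentiable ℝ X) (hY : Differentiable ℝ Y) (p : V3) :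
    nijT N X Y p = ![X p 2 * Y p 0 - X p 0 * Y p 2, X p 2 * Y p 1 - X p 1 * Y p 2, 0] := by
  have hMX := diffM hX
  have hMY := diffM hY
  have hXc : ∀ i, Differentiable ℝ (fun q => X q i) := diffcomp hX
  have hYc : ∀ i, Differentiable ℝ (fun q => Y q i) := diffcomp hY
  simp only [nijT, hN]
  apply vec_ext <;>
  · simp only [Pi.sub_apply, Pi.add_apply, Matrix.cons_val_zero, Matrix.cons_val_one,
      Matrix.head_cons, Matrix.cons_val_two, Matrix.tail_cons,
      lieB_apply hMX hMY p, lieB_apply hMX hYc p, lieB_apply hXc hMY p, lieB_apply hXc hYc p]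
    simp only [dC0 hX, dC0 hY, dC1 hX, dC1 hY, dC2 hX, dC2 hY, dcoord,
      Matrix.cons_val_zero, Matrix.cons_val_one, Matrix.head_cons,
      Matrix.cons_val_two, Matrix.tail_cons]
    ring

/-- Magri–Veselov example: the tensor field
`N = −(y/2)∂x⊗dz + 2∂y⊗dx − z∂y⊗dz + 2∂z⊗dy` on ℝ³ together with `θ = dz` is a Haantjes
structure: explicit Nijenhuis torsion (a), vanishing Haantjes torsion (b),
`⟨dz,T_N(X,Y)⟩ = 0` (c), `i_N(dz) = 2dy` so `d(i_N(dz)) = 0` (d) — and `dz` is closed. -/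
theorem stmt19
    (N : V3 → V3 → V3)
    (hN : ∀ p v, N p v = ![-(p 1 / 2) * v 2, 2 * v 0 - p 2 * v 2, 2 * v 1]) :
    -- (a) explicit Nijenhuis torsion
    (∀ X Y : V3 → V3, ContDiff ℝ (⊤ : ℕ∞) X → ContDiff ℝ (⊤ : ℕ∞) Y → ∀ p,
      nijT N X Y p
        = ![X p 2 * Y p 0 - X p 0 * Y p 2, X p 2 * Y p 1 - X p 1 * Y p 2, 0]) ∧
    -- (b) vanishing Haantjes torsion
    (∀ X Y : V3 → V3, ContDiff ℝ (⊤ : ℕ∞) X → ContDiff ℝ (⊤ : ℕ∞) Y → ∀ p, haanT N X Y p = 0) ∧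
    -- (c) ⟨dz, T_N(X,Y)⟩ = 0
    (∀ X Y : V3 → V3, ContDiff ℝ (⊤ : ℕ∞) X → ContDiff ℝ (⊤ : ℕ∞) Y → ∀ p, nijT N X Y p 2 = 0) ∧
    -- (d) i_N(dz) = 2dy, hence d(i_N(dz)) = 0
    (∀ p v, N p v 2 = 2 * v 1) ∧
    (∀ X Y : V3 → V3, ContDiff ℝ (⊤ : ℕ∞) X → ContDiff ℝ (⊤ : ℕ∞) Y → ∀ p,
      dOne (fun q v => N q v 2) X Y p = 0) ∧
    -- dz is closed
    (∀ X Y : V3 → V3, ContDiff ℝ (⊤ : ℕ∞) X → ContDiff ℝ (⊤ : ℕ∞) Y → ∀ p,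
      dOne (fun _ v => v 2) X Y p = 0) := by
  refine ⟨?_, ?_, ?_, ?_, ?_, ?_⟩
  · -- (a)
    intro X Y hX hY p
    exact nij_key N hN X Y (hX.differentiable (by simp)) (hY.differentiable (by simp)) p
  · -- (b)
    intro X Y hX hY p
    have hXd := hX.differentiable (by simp)
    have hYd := hY.differentiable (by simp)
    have hNX : (fun q => N q (X q))
        = fun q => (![-(q 1 / 2) * X q 2, 2 * X q 0 - q 2 * X q 2, 2 * X q 1] : V3) :=
      funext fun q => hN q (X q)
    have hNY : (fun q => N q (Y q))
        = fun q => (![-(q 1 / 2) * Y q 2, 2 * Y q 0 - q 2 * Y q 2, 2 * Y q 1] : V3) :=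
      funext fun q => hN q (Y q)
    have dA := diffMfull hXd
    have dB := diffMfull hYd
    simp only [haanT, hNX, hNY]
    rw [nij_key N hN _ _ dA dB p, nij_key N hN _ _ dA hYd p, nij_key N hN _ _ hXd dB p,
      nij_key N hN _ _ hXd hYd p]
    simp only [hN]
    apply vec_ext <;>
    · simp only [Pi.sub_apply, Pi.add_apply, Pi.zero_apply, Matrix.cons_val_zero,
        Matrix.cons_val_one, Matrix.head_cons, Matrix.cons_val_two, Matrix.tail_cons]
      ring
  · -- (c)
    intro X Y hX hY p
    rw [nij_key N hN X Y (hX.differentiable (by simp)) (hY.differentiable (by simp)) p]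
    simp
  · -- (d1)
    intro p v
    rw [hN]
    simp
  · -- (d2)
    intro X Y hX hY p
    have hXd := hX.differentiable (by simp)
    have hYd := hY.differentiable (by simp)
    have hXc : ∀ i, Differentiable ℝ (fun q => X q i) := diffcomp hXd
    have hYc : ∀ i, Differentiable ℝ (fun q => Y q i) := diffcomp hYd
    simp only [dOne, hN, Matrix.cons_val_two, Matrix.tail_cons, Matrix.head_cons,
      Matrix.cons_val_one]
    rw [dC2 hXd, dC2 hYd, lieB_apply hXc hYc p 1]
    ring
  · -- dz closed
    intro X Y hX hY p
    have hXd := hX.differentiable (by simp)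
    have hYd := hY.differentiable (by simp)
    have hXc : ∀ i, Differentiable ℝ (fun q => X q i) := diffcomp hXd
    have hYc : ∀ i, Differentiable ℝ (fun q => Y q i) := diffcomp hYd
    simp only [dOne]
    rw [lieB_apply hXc hYc p 2]
    ring
end
end
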